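/- arXiv:2212.05968 — 13 statements merged into one kernel-verified Lean document; each statement's English description precedes it below -/
import Mathlib

section
/- For all integers n ≥ k ≥ 1 and all positive reals x_1, …, x_n (indices understood modulo n), the Diananda sum satisfies k · Σ_{j=1}^n x_j/(x_{j+1} + x_{j+2} + … + x_{j+k}) ≥ n · k · (2^{1/k} − 1). -/
/-!
Write `W = windowSum x`, so `W m j = x j + ⋯ + x (j + m - 1)`, and `Q = windowProd x n`. Since
`W (m+1) j · W (m+1) (j+1) - W (m+2) j · W m (j+1) = x j · x (j+m+1) ≥ 0`, multiplying over a
period shows that `m ↦ Q m` is log-concave, so `Q (2k) ≤ Q k · q ^ k` with `q = Q (k+1) / Q k`.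
On the other hand `W (2k) j = W k j + W k (j+k)`, and AM-GM termwise gives `Q (2k) ≥ 2 ^ n · Q k`;
hence `q ^ k ≥ 2 ^ n`. Now `q` is the product of the `n` numbers
`W (k+1) j / W k (j+1) = 1 + x j / W k (j+1)`, so AM-GM for them bounds the Diananda sum below by
`n · (q ^ (1/n) - 1) ≥ n · (2 ^ (1/k) - 1)`.
-/

open Finset Function

theorem Function.Periodic.prod_range_comp_add {M : Type*} [CommMonoid M] {f : ℕ → M} {n : ℕ}
    (hf : Periodic f n) (s : ℕ) : ∏ j ∈ range n, f (j + s) = ∏ j ∈ range n, f j := by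
  induction s with
  | zero => rfl
  | succ s ih =>
    rw [← ih]
    obtain _ | m := n
    · rfl
    · have hwrap : f (m + (s + 1)) = f (0 + s) := by
        rw [zero_add, ← hf s]
        ring_nf
      rw [prod_range_succ, prod_range_succ', hwrap]
      simp only [add_right_comm _ 1 s, add_assoc]

theorem le_mul_div_pow_of_mul_le_sq {a : ℕ → ℝ} (ha : ∀ i, 0 < a i)
    (h : ∀ i, a (i + 2) * a i ≤ a (i + 1) ^ 2) (i : ℕ) : a i ≤ a 0 * (a 1 / a 0) ^ i := by
  have hratio : Antitone fun i => a (i + 1) / a i := antitone_nat_of_succ_le fun i => by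
    rw [div_le_div_iff₀ (ha _) (ha _)]
    simpa [sq] using h i
  induction i with
  | zero => simp
  | succ i ih =>
    calc a (i + 1) = a i * (a (i + 1) / a i) := by field_simp [(ha i).ne']
      _ ≤ a 0 * (a 1 / a 0) ^ i * (a 1 / a 0) :=
          mul_le_mul ih (hratio (Nat.zero_le i)) (div_pos (ha _) (ha _)).le
            (mul_nonneg (ha 0).le (pow_nonneg (div_pos (ha 1) (ha 0)).le i))
      _ = a 0 * (a 1 / a 0) ^ (i + 1) := by ring

theorem two_pow_mul_prod_le_prod_add_comp_add {f : ℕ → ℝ} {n : ℕ} (hf₀ : ∀ j, 0 ≤ f j)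
    (hf : Periodic f n) (s : ℕ) :
    2 ^ n * ∏ j ∈ range n, f j ≤ ∏ j ∈ range n, (f j + f (j + s)) := by
  have hsqrt : ∏ j ∈ range n, √(f (j + s)) = ∏ j ∈ range n, √(f j) :=
    (hf.comp Real.sqrt).prod_range_comp_add s
  calc 2 ^ n * ∏ j ∈ range n, f j = ∏ j ∈ range n, 2 * (√(f j) * √(f (j + s))) := by
        rw [prod_mul_distrib, prod_const, card_range, prod_mul_distrib, hsqrt, ← prod_mul_distrib]
        simp only [Real.mul_self_sqrt (hf₀ _)]
    _ ≤ ∏ j ∈ range n, (f j + f (j + s)) := by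
        refine prod_le_prod (fun j _ => by positivity) fun j _ => ?_
        have := two_mul_le_add_sq (√(f j)) (√(f (j + s)))
        rwa [Real.sq_sqrt (hf₀ _), Real.sq_sqrt (hf₀ _), mul_assoc] at this

theorem Real.card_mul_prod_rpow_le_sum {ι : Type*} (s : Finset ι) {t : ι → ℝ}
    (ht : ∀ i ∈ s, 0 ≤ t i) : #s * (∏ i ∈ s, t i) ^ (1 / #s : ℝ) ≤ ∑ i ∈ s, t i := by
  rcases s.eq_empty_or_nonempty with rfl | hs
  · simp
  have hcard : (0 : ℝ) < #s := by exact_mod_cast hs.card_pos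
  have amgm := Real.geom_mean_le_arith_mean s (fun _ => 1) t (fun _ _ => zero_le_one)
    (by simpa using hs.card_pos) ht
  simp only [Real.rpow_one, one_mul, sum_const, nsmul_eq_mul, mul_one] at amgm
  rw [le_div_iff₀ hcard] at amgm
  simpa [mul_comm] using amgm

theorem Real.rpow_one_div_le_rpow_one_div_of_pow_le_pow {a b : ℝ} {m n : ℕ} (ha : 0 ≤ a)
    (hb : 0 ≤ b) (hm : m ≠ 0) (hn : n ≠ 0) (h : a ^ m ≤ b ^ n) :
    a ^ (1 / n : ℝ) ≤ b ^ (1 / m : ℝ) := by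
  have hroot := Real.rpow_le_rpow (pow_nonneg ha m) h (by positivity : (0 : ℝ) ≤ 1 / (m * n))
  rwa [← Real.rpow_natCast, ← Real.rpow_natCast b, ← Real.rpow_mul ha, ← Real.rpow_mul hb,
    show (m : ℝ) * (1 / (m * n)) = 1 / n by field_simp,
    show (n : ℝ) * (1 / (m * n)) = 1 / m by field_simp] at hroot

theorem card_mul_rpow_one_div_le_sum_of_pow_card_le {ι : Type*} (s : Finset ι) {t : ι → ℝ}
    {c : ℝ} {k : ℕ} (hc : 0 ≤ c) (hk : k ≠ 0) (ht : ∀ i ∈ s, 0 ≤ t i)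
    (h : c ^ #s ≤ (∏ i ∈ s, t i) ^ k) : #s * c ^ (1 / k : ℝ) ≤ ∑ i ∈ s, t i := by
  rcases s.eq_empty_or_nonempty with rfl | hs
  · simp
  have hroot := Real.rpow_one_div_le_rpow_one_div_of_pow_le_pow hc (prod_nonneg ht)
    hs.card_pos.ne' hk h
  calc (#s : ℝ) * c ^ (1 / k : ℝ) ≤ #s * (∏ i ∈ s, t i) ^ (1 / #s : ℝ) := by gcongr
    _ ≤ ∑ i ∈ s, t i := Real.card_mul_prod_rpow_le_sum s ht

section WindowSum

variable {x : ℕ → ℝ} {n : ℕ}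

def windowSum (x : ℕ → ℝ) (m j : ℕ) : ℝ := ∑ i ∈ range m, x (j + i)

theorem windowSum_succ' (x : ℕ → ℝ) (m j : ℕ) :
    windowSum x (m + 1) j = x j + windowSum x m (j + 1) := by
  simp only [windowSum, sum_range_succ', add_zero, add_comm (x j), add_assoc, add_comm 1]

theorem windowSum_add (x : ℕ → ℝ) (a b j : ℕ) :
    windowSum x (a + b) j = windowSum x a j + windowSum x b (j + a) := by
  simp only [windowSum, sum_range_add, add_assoc]

theorem windowSum_nonneg (hx : ∀ j, 0 ≤ x j) (m j : ℕ) : 0 ≤ windowSum x m j :=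
  sum_nonneg fun _ _ => hx _

theorem windowSum_pos (hx : ∀ j, 0 < x j) {m : ℕ} (hm : m ≠ 0) (j : ℕ) : 0 < windowSum x m j :=
  sum_pos (fun _ _ => hx _) (nonempty_range_iff.mpr hm)

theorem Function.Periodic.windowSum (hx : Periodic x n) (m : ℕ) : Periodic (windowSum x m) n :=
  fun j => sum_congr rfl fun i _ => by rw [add_right_comm, hx]

theorem windowSum_mul_le (hx : ∀ j, 0 ≤ x j) (m j : ℕ) :
    windowSum x (m + 2) j * windowSum x m (j + 1) ≤
      windowSum x (m + 1) j * windowSum x (m + 1) (j + 1) := by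
  rw [windowSum_succ' x (m + 1), windowSum_succ' x m j, windowSum_add x m 1 (j + 1)]
  have hend : 0 ≤ windowSum x 1 (j + 1 + m) := windowSum_nonneg hx _ _
  nlinarith [mul_nonneg (hx j) hend]

def windowProd (x : ℕ → ℝ) (n m : ℕ) : ℝ := ∏ j ∈ range n, windowSum x m j

theorem windowProd_pos (hx : ∀ j, 0 < x j) {m : ℕ} (hm : m ≠ 0) : 0 < windowProd x n m :=
  prod_pos fun j _ => windowSum_pos hx hm j

theorem windowProd_mul_le_sq (hx : ∀ j, 0 ≤ x j) (hper : Periodic x n) (m : ℕ) :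
    windowProd x n (m + 2) * windowProd x n m ≤ windowProd x n (m + 1) ^ 2 := by
  have hshift (m : ℕ) : ∏ j ∈ range n, windowSum x m (j + 1) = windowProd x n m :=
    (hper.windowSum m).prod_range_comp_add 1
  rw [← hshift m, sq]
  nth_rw 2 [← hshift (m + 1)]
  simp only [windowProd, ← prod_mul_distrib]
  exact prod_le_prod (fun j _ => mul_nonneg (windowSum_nonneg hx _ _) (windowSum_nonneg hx _ _))
    fun j _ => windowSum_mul_le hx m j

theorem two_pow_mul_windowProd_le (hx : ∀ j, 0 ≤ x j) (hper : Periodic x n) (k : ℕ) :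
    2 ^ n * windowProd x n k ≤ windowProd x n (k + k) := by
  simpa only [windowProd, windowSum_add] using
    two_pow_mul_prod_le_prod_add_comp_add (windowSum_nonneg hx k) (hper.windowSum k) k

theorem two_pow_le_windowProd_div_pow (hx : ∀ j, 0 < x j) (hper : Periodic x n) {k : ℕ}
    (hk : k ≠ 0) : 2 ^ n ≤ (windowProd x n (k + 1) / windowProd x n k) ^ k := by
  have hconcave := le_mul_div_pow_of_mul_le_sq (a := fun i => windowProd x n (k + i))
    (fun i => windowProd_pos hx (by omega))
    (fun i => windowProd_mul_le_sq (fun j => (hx j).le) hper (k + i)) k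
  simp only [add_zero] at hconcave
  refine le_of_mul_le_mul_left ?_ (windowProd_pos (n := n) hx hk)
  rw [mul_comm]
  exact (two_pow_mul_windowProd_le (fun j => (hx j).le) hper k).trans hconcave

theorem prod_windowSum_succ_div (hper : Periodic x n) (k : ℕ) :
    ∏ j ∈ range n, windowSum x (k + 1) j / windowSum x k (j + 1) =
      windowProd x n (k + 1) / windowProd x n k := by
  rw [prod_div_distrib, (hper.windowSum k).prod_range_comp_add 1]
  rfl

end WindowSum

theorem diananda_lower_bound_general (n k : ℕ) (hk : 1 ≤ k)
    (x : ℕ → ℝ) (hx : ∀ j, 0 < x j) (hper : ∀ j, x (j + n) = x j) :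
    (k : ℝ) * ∑ j ∈ Finset.range n, x j / (∑ i ∈ Finset.range k, x (j + i + 1)) ≥
      (n : ℝ) * k * ((2 : ℝ) ^ ((1 : ℝ) / k) - 1) := by
  have hk₀ : k ≠ 0 := Nat.one_le_iff_ne_zero.mp hk
  have hterm (j : ℕ) : windowSum x (k + 1) j / windowSum x k (j + 1) =
      x j / ∑ i ∈ range k, x (j + i + 1) + 1 := by
    rw [windowSum_succ', add_div, div_self (windowSum_pos hx hk₀ _).ne']
    simp only [windowSum, add_right_comm j]
  have hbound := card_mul_rpow_one_div_le_sum_of_pow_card_le (range n)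
    (t := fun j => windowSum x (k + 1) j / windowSum x k (j + 1)) zero_le_two hk₀
    (fun j _ => (div_pos (windowSum_pos hx (Nat.succ_ne_zero k) j) (windowSum_pos hx hk₀ _)).le)
    (by simpa only [card_range, prod_windowSum_succ_div hper] using
      two_pow_le_windowProd_div_pow hx hper hk₀)
  simp only [hterm, sum_add_distrib, card_range, sum_const, nsmul_eq_mul, mul_one] at hbound
  rw [ge_iff_le, show (n : ℝ) * k * (2 ^ (1 / k : ℝ) - 1) = k * (n * 2 ^ (1 / k : ℝ) - n) by ring]
  exact mul_le_mul_of_nonneg_left (by linarith) k.cast_nonneg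

theorem diananda_lower_bound (n k : ℕ) (hk : 1 ≤ k) (hkn : k ≤ n)
    (x : ℕ → ℝ) (hx : ∀ j, 0 < x j) (hper : ∀ j, x (j + n) = x j) :
    (k : ℝ) * ∑ j ∈ Finset.range n, x j / (∑ i ∈ Finset.range k, x (j + i + 1)) ≥
      (n : ℝ) * k * ((2 : ℝ) ^ ((1 : ℝ) / k) - 1) :=
  diananda_lower_bound_general n k hk x hx hper
end

section
/- For all integers n ≥ k ≥ 1, the infimum over all positive vectors x = (x_1, …, x_n) of the sum Σ_{j=1}^n x_j / max(x_{j+1}, …, x_{j+k}) (indices modulo n) equals ⌊(n + k − 1)/k⌋, i.e., this value is the greatest lower bound of the set of all such sums. -/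
/-!
Lower bound: start at a global maximum `j₀` of `x` and repeatedly jump to the position of the
maximum of the next window. Each jump advances by at most `k`, so the first `⌈n/k⌉` points of this
path are distinct modulo `n`, and their terms in the sum are the ratios `x sₜ / x sₜ₊₁` of
consecutive points. As the path never rises above its start, `log y ≤ y - 1` telescopes to show
that these terms alone add up to at least `⌈n/k⌉`.

Upper bound: taking `x = 1` at the multiples of `k` in each period and `x = δ` elsewhere makes every
window maximum equal to `1`, so the sum is at most `⌈n/k⌉ + nδ`.
-/

open Finset Function

section WindowMax

variable {α : Type*} [LinearOrder α] {k : ℕ}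

def windowMax (hk : (range k).Nonempty) (x : ℕ → α) (j : ℕ) : α :=
  (range k).sup' hk fun i => x (j + i + 1)

theorem exists_windowMax_eq (hk : (range k).Nonempty) (x : ℕ → α) (j : ℕ) :
    ∃ i, j < i ∧ i ≤ j + k ∧ windowMax hk x j = x i := by
  obtain ⟨i, hi, hmax⟩ := exists_mem_eq_sup' hk fun i => x (j + i + 1)
  exact ⟨j + i + 1, by omega, by simp only [mem_range] at hi; omega, hmax⟩

theorem Function.Periodic.windowMax (hk : (range k).Nonempty) {x : ℕ → α} {n : ℕ}
    (hx : Periodic x n) : Periodic (windowMax hk x) n := fun j => by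
  simp only [_root_.windowMax, add_right_comm j n, add_right_comm _ n 1, hx _]

end WindowMax

theorem Nat.count_dvd {k : ℕ} (hk : 0 < k) (n : ℕ) : Nat.count (k ∣ ·) n = (n + k - 1) / k := by
  induction n with
  | zero => simp [Nat.div_eq_of_lt (Nat.sub_lt hk one_pos)]
  | succ n ih =>
    rw [Nat.count_succ, ih, show n + 1 + k - 1 = n + k - 1 + 1 by omega, Nat.succ_div,
      show n + k - 1 + 1 = n + k by omega]
    simp only [Nat.dvd_add_self_right]

theorem Function.iterate_le_add_mul {f : ℕ → ℕ} {k : ℕ} (hf : ∀ j, f j ≤ j + k) (j t : ℕ) :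
    f^[t] j ≤ j + t * k := by
  induction t with
  | zero => simp
  | succ t ih => rw [iterate_succ_apply', Nat.succ_mul]; linarith [hf (f^[t] j)]

theorem sum_comp_le_sum_range_of_periodic {g : ℕ → ℝ} {n : ℕ} (hn : 0 < n) (hg : Periodic g n)
    (hg₀ : ∀ j, 0 ≤ g j) {s : ℕ → ℕ} (hs : StrictMono s) {a T : ℕ}
    (hsT : ∀ t < T, s t ∈ Ico a (a + n)) :
    ∑ t ∈ range T, g (s t) ≤ ∑ j ∈ range n, g j := by
  have hinj : Set.InjOn (fun t => s t % n) (range T) := fun t ht t' ht' heq => by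
    simp only [coe_range, Set.mem_Iio] at ht ht'
    have h := hsT t ht
    have h' := hsT t' ht'
    simp only [mem_Ico] at h h'
    exact hs.injective <| Nat.ModEq.eq_of_abs_lt heq (by rw [abs_lt]; omega)
  calc ∑ t ∈ range T, g (s t) = ∑ t ∈ range T, g (s t % n) := by simp only [hg.map_mod_nat]
    _ = ∑ j ∈ (range T).image (fun t => s t % n), g j := (sum_image hinj).symm
    _ ≤ ∑ j ∈ range n, g j := sum_le_sum_of_subset_of_nonneg
        (image_subset_iff.2 fun t _ => mem_range.2 (Nat.mod_lt _ hn)) fun j _ _ => hg₀ j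

theorem natCast_le_sum_div_succ {a : ℕ → ℝ} (ha : ∀ t, 0 < a t) {T : ℕ} (hT : a T ≤ a 0) :
    (T : ℝ) ≤ ∑ t ∈ range T, a t / a (t + 1) := by
  have hterm : ∀ t, 1 + (Real.log (a t) - Real.log (a (t + 1))) ≤ a t / a (t + 1) := fun t => by
    have := Real.log_le_sub_one_of_pos (div_pos (ha t) (ha (t + 1)))
    rw [Real.log_div (ha t).ne' (ha _).ne'] at this
    linarith
  calc (T : ℝ) ≤ T + (Real.log (a 0) - Real.log (a T)) := by
        linarith [Real.log_le_log (ha T) hT]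
    _ = ∑ t ∈ range T, (1 + (Real.log (a t) - Real.log (a (t + 1)))) := by
        rw [sum_add_distrib, sum_range_sub' (fun t => Real.log (a t))]; simp
    _ ≤ ∑ t ∈ range T, a t / a (t + 1) := sum_le_sum fun t _ => hterm t

theorem natCast_add_sub_one_div_le_sum_div_windowMax {n k : ℕ} (hk : (range k).Nonempty)
    {x : ℕ → ℝ} (hx : ∀ j, 0 < x j) (hper : Periodic x n) :
    (((n + k - 1) / k : ℕ) : ℝ) ≤ ∑ j ∈ range n, x j / windowMax hk x j := by
  have hk₀ : 0 < k := Nat.pos_of_ne_zero (nonempty_range_iff.1 hk)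
  rcases n.eq_zero_or_pos with rfl | hn
  · simp [Nat.div_eq_of_lt (Nat.sub_lt hk₀ one_pos)]
  choose f hjf hfj hmax_eq using exists_windowMax_eq hk x
  obtain ⟨j₀, -, hj₀⟩ := exists_max_image (range n) x (nonempty_range_iff.2 hn.ne')
  have hx_le : ∀ j, x j ≤ x j₀ := fun j =>
    hper.map_mod_nat j ▸ hj₀ _ (mem_range.2 (j.mod_lt hn))
  set m := (n + k - 1) / k
  -- the greedy path `j₀ → f j₀ → f (f j₀) → ⋯` jumps to the argmax of each window
  set s : ℕ → ℕ := fun t => f^[t] j₀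
  have hs_succ : ∀ t, s (t + 1) = f (s t) := fun t => iterate_succ_apply' f t j₀
  have hs : StrictMono s := strictMono_nat_of_lt_succ fun t => hs_succ t ▸ hjf _
  have hs_mem : ∀ t < m, s t ∈ Ico j₀ (j₀ + n) := fun t ht => by
    have hlow : j₀ ≤ s t := hs.monotone t.zero_le
    have hup : s t ≤ j₀ + t * k := iterate_le_add_mul hfj j₀ t
    have htk : t * k + k ≤ n + k - 1 := Nat.succ_mul t k ▸ (Nat.le_div_iff_mul_le hk₀).1 ht
    exact mem_Ico.2 ⟨hlow, by omega⟩
  have hg : Periodic (fun j => x j / windowMax hk x j) n := fun j => by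
    simp only [hper j, hper.windowMax hk j]
  calc (m : ℝ) ≤ ∑ t ∈ range m, x (s t) / x (s (t + 1)) :=
        natCast_le_sum_div_succ (fun t => hx _) (hx_le _)
    _ = ∑ t ∈ range m, x (s t) / windowMax hk x (s t) := by simp only [hs_succ, hmax_eq]
    _ ≤ ∑ j ∈ range n, x j / windowMax hk x j :=
        sum_comp_le_sum_range_of_periodic hn hg
          (fun j => (div_pos (hx j) (hmax_eq j ▸ hx _)).le) hs hs_mem

theorem exists_lt_dvd_add_add_one_mod {n k j : ℕ} (hk : 0 < k) (hj : j < n) :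
    ∃ i < k, k ∣ (j + i + 1) % n := by
  -- the first multiple of `k` after `j`, or `n ≡ 0` if that comes first
  have hlt := Nat.lt_mul_div_succ j hk
  have hle : k * (j / k + 1) ≤ j + k := by
    rw [mul_add, mul_one]; linarith [Nat.mul_div_le j k]
  rcases lt_or_ge (k * (j / k + 1)) n with h | h
  · refine ⟨k * (j / k + 1) - j - 1, by omega, ?_⟩
    rw [show j + (k * (j / k + 1) - j - 1) + 1 = k * (j / k + 1) by omega, Nat.mod_eq_of_lt h]
    exact dvd_mul_right k _
  · exact ⟨n - j - 1, by omega, by simp [show j + (n - j - 1) + 1 = n by omega]⟩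

theorem exists_sum_div_windowMax_le {n k : ℕ} (hk : (range k).Nonempty) {δ : ℝ} (hδ₀ : 0 < δ)
    (hδ₁ : δ ≤ 1) :
    ∃ x : ℕ → ℝ, (∀ j, 0 < x j) ∧ Periodic x n ∧
      ∑ j ∈ range n, x j / windowMax hk x j ≤ ((n + k - 1) / k : ℕ) + n * δ := by
  have hk₀ : 0 < k := Nat.pos_of_ne_zero (nonempty_range_iff.1 hk)
  set x : ℕ → ℝ := fun j => if k ∣ j % n then 1 else δ
  have hx_le : ∀ j, x j ≤ 1 := fun j => by simp only [x]; split_ifs <;> linarith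
  have hmax : ∀ j < n, windowMax hk x j = 1 := fun j hj => by
    obtain ⟨i, hi, hdvd⟩ := exists_lt_dvd_add_add_one_mod hk₀ hj
    exact le_antisymm (sup'_le _ _ fun i _ => hx_le _)
      (le_sup'_of_le _ (mem_range.2 hi) (by simp [x, hdvd]))
  refine ⟨x, fun j => by simp only [x]; split_ifs <;> linarith, fun j => by simp [x], ?_⟩
  calc ∑ j ∈ range n, x j / windowMax hk x j
      ≤ ∑ j ∈ range n, ((if k ∣ j then 1 else 0) + δ) := sum_le_sum fun j hj => by
        rw [mem_range] at hj
        simp only [hmax j hj, div_one, x, Nat.mod_eq_of_lt hj]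
        split_ifs <;> linarith
    _ = ((n + k - 1) / k : ℕ) + n * δ := by
        rw [sum_add_distrib, sum_boole, ← Nat.count_eq_card_filter_range, Nat.count_dvd hk₀]
        simp

theorem shapiro_diananda_max_infimum (n k : ℕ) (hk : 1 ≤ k) :
    IsGLB
      { S : ℝ | ∃ x : ℕ → ℝ, (∀ j, 0 < x j) ∧ (∀ j, x (j + n) = x j) ∧
          S = ∑ j ∈ Finset.range n,
                x j / ((Finset.range k).sup' (Finset.nonempty_range_iff.mpr (by omega))
                  (fun i => x (j + i + 1))) }
      (((n + k - 1) / k : ℕ) : ℝ) := by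
  refine ⟨?_, fun b hb => le_of_forall_pos_le_add fun ε hε => ?_⟩
  · rintro S ⟨x, hx, hper, rfl⟩
    exact natCast_add_sub_one_div_le_sum_div_windowMax _ hx hper
  · set δ := ε / (n + ε)
    have hδ₀ : 0 < δ := by positivity
    have hδ₁ : δ ≤ 1 := (div_le_one (by positivity)).2 (by linarith [n.cast_nonneg (α := ℝ)])
    have hnδ : n * δ ≤ ε := by
      rw [mul_div_assoc', div_le_iff₀ (by positivity)]; nlinarith [n.cast_nonneg (α := ℝ)]
    obtain ⟨x, hx, hper, hsum⟩ :=
      exists_sum_div_windowMax_le (n := n) (nonempty_range_iff.2 (by omega : k ≠ 0)) hδ₀ hδ₁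
    calc b ≤ ∑ j ∈ range n, x j / windowMax _ x j := hb ⟨x, hx, hper, rfl⟩
      _ ≤ ((n + k - 1) / k : ℕ) + n * δ := hsum
      _ ≤ ((n + k - 1) / k : ℕ) + ε := by gcongr
end

section
/- Let k ≥ 2 be an integer, let p ∈ (1, ∞) and let q satisfy 1/p + 1/q = 1. Define B_{k,1} as the infimum, over all integers n ≥ k and all positive vectors x = (x_1,…,x_n), of (1/n) · k · Σ_{j=1}^n x_j/(x_{j+1} + … + x_{j+k}) (indices modulo n), and define U_t(k) = (k^t − 1)^t · t^{−t} for t > 0. Then for every integer n ≥ k and every positive vector x = (x_1, …, x_n), Σ_{j=1}^n x_j / ((x_{j+1}^p + … + x_{j+k}^p)/k)^{1/p} ≥ n · B_{k,1}^{1/p} · (k^{−1/q²}/(k − 1)) · U_{1/p}(k) · U_{1/q}(k). -/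
/-!
Write `t = 1/p`, `u = 1/q`, and let `a_j`, `m_j` be the arithmetic mean and the maximum of
`x_{j+1}, …, x_{j+k}`. Since `∑ x^p ≤ (∑ x) m^(p-1)`, the power mean is at most `a_j^t m_j^u`, and
the chord of the concave map `v ↦ v^u` over `[1/k, 1]`, evaluated at `v = a_j / m_j`, gives
`x_j / M_{k,p} ≥ α x_j / m_j + β x_j / a_j` with `α = (k - k^t)/(k - 1)`, `β = (k^t - 1)/(k - 1)`.
Summed over `j`, the `β`-part is at least `n B_{k,1}`. For the `α`-part, the map sending `j` to the
position of its maximum moves forward by `1` to `k` steps, so it has a cycle of length `L ≥ n/k`;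
the ratios `x_j / x_{h j}` along that cycle have product `1`, hence sum at least `L`.
Weighted AM-GM with weights `u, t` turns `α n/k + β n B_{k,1}` into the stated product.
-/

open Finset Function

theorem Function.exists_mem_periodicPts {α : Type*} [Finite α] [Nonempty α] (f : α → α) :
    ∃ c, c ∈ periodicPts f := by
  obtain ⟨a, b, hab, heq⟩ :=
    Finite.exists_ne_map_eq_of_infinite fun m : ℕ => f^[m] (Classical.arbitrary α)
  wlog hlt : a < b generalizing a b
  · exact this b a hab.symm heq.symm (hab.lt_or_gt.resolve_left hlt)
  refine ⟨f^[a] (Classical.arbitrary α), mk_mem_periodicPts (Nat.sub_pos_of_lt hlt) ?_⟩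
  simp only [IsPeriodicPt, IsFixedPt, ← iterate_add_apply, Nat.sub_add_cancel hlt.le]
  exact heq.symm

theorem natCast_le_sum_div_succ_of_eq (g : ℕ → ℝ) (hg : ∀ i, 0 < g i) {L : ℕ}
    (hL : g L = g 0) : (L : ℝ) ≤ ∑ i ∈ range L, g i / g (i + 1) := by
  calc (L : ℝ) = ∑ i ∈ range L, (1 + (Real.log (g i) - Real.log (g (i + 1)))) := by
        rw [sum_add_distrib, sum_range_sub' (fun i => Real.log (g i)), hL]; simp
    _ ≤ ∑ i ∈ range L, g i / g (i + 1) := sum_le_sum fun i _ => by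
        have := Real.log_le_sub_one_of_pos (div_pos (hg i) (hg (i + 1)))
        rw [Real.log_div (hg i).ne' (hg (i + 1)).ne'] at this
        linarith

theorem Function.minimalPeriod_le_sum_div {α : Type*} [Fintype α] (f : α → α) (w : α → ℝ)
    (hw : ∀ a, 0 < w a) (c : α) : (minimalPeriod f c : ℝ) ≤ ∑ a, w a / w (f a) := by
  classical
  set L := minimalPeriod f c
  calc (L : ℝ) ≤ ∑ i ∈ range L, w (f^[i] c) / w (f^[i + 1] c) :=
        natCast_le_sum_div_succ_of_eq (fun i => w (f^[i] c)) (fun _ => hw _)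
          (by simp only [L, iterate_minimalPeriod, iterate_zero_apply])
    _ = ∑ a ∈ (range L).image (f^[·] c), w a / w (f a) := by
        rw [sum_image (by simpa only [coe_range] using iterate_injOn_Iio_minimalPeriod)]
        simp only [iterate_succ_apply']
    _ ≤ ∑ a, w a / w (f a) :=
        sum_le_univ_sum_of_nonneg fun a => (div_pos (hw a) (hw (f a))).le

theorem le_mul_minimalPeriod_of_val_eq_add_mod {n k : ℕ} (f : Fin n → Fin n) (d : Fin n → ℕ)
    (hf : ∀ j, (f j : ℕ) = (j + d j) % n) (hd : ∀ j, 0 < d j) (hdk : ∀ j, d j ≤ k)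
    {c : Fin n} (hc : c ∈ periodicPts f) : n ≤ k * minimalPeriod f c := by
  set L := minimalPeriod f c
  have hiter : ∀ m, (f^[m] c : ℕ) = (c + ∑ i ∈ range m, d (f^[i] c)) % n := by
    intro m
    induction m with
    | zero => simp [Nat.mod_eq_of_lt c.isLt]
    | succ m ih => rw [iterate_succ_apply', hf, ih, sum_range_succ, Nat.mod_add_mod, add_assoc]
  have hdvd : n ∣ ∑ i ∈ range L, d (f^[i] c) := by
    have h : (c + ∑ i ∈ range L, d (f^[i] c)) % n = (c + 0) % n := by
      rw [← hiter, iterate_minimalPeriod, add_zero, Nat.mod_eq_of_lt c.isLt]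
    exact Nat.modEq_zero_iff_dvd.1 (Nat.ModEq.add_left_cancel' _ h)
  have hpos : 0 < ∑ i ∈ range L, d (f^[i] c) :=
    sum_pos (fun i _ => hd _) (nonempty_range_iff.2 (minimalPeriod_pos_of_mem_periodicPts hc).ne')
  calc n ≤ ∑ i ∈ range L, d (f^[i] c) := Nat.le_of_dvd hpos hdvd
    _ ≤ k * L := by simpa [mul_comm] using sum_le_card_nsmul (range L) _ k fun i _ => hdk _

theorem natCast_div_le_sum_div_add {x : ℕ → ℝ} {n k : ℕ} (hn : 0 < n) (hx : ∀ j, 0 < x j)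
    (hper : Periodic x n) (d : ℕ → ℕ) (hd : ∀ j, 0 < d j) (hdk : ∀ j, d j ≤ k) :
    (n : ℝ) / k ≤ ∑ j ∈ range n, x j / x (j + d j) := by
  let f : Fin n → Fin n := fun j => ⟨(j + d j) % n, Nat.mod_lt _ hn⟩
  have : Nonempty (Fin n) := ⟨⟨0, hn⟩⟩
  obtain ⟨c, hc⟩ := exists_mem_periodicPts f
  have hperiod := le_mul_minimalPeriod_of_val_eq_add_mod f (d ∘ Fin.val) (fun _ => rfl)
    (fun _ => hd _) (fun _ => hdk _) hc
  calc (n : ℝ) / k ≤ minimalPeriod f c :=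
        div_le_of_le_mul₀ (Nat.cast_nonneg _) (Nat.cast_nonneg _)
          (by rw [mul_comm]; exact_mod_cast hperiod)
    _ ≤ ∑ a : Fin n, x a / x (f a) := minimalPeriod_le_sum_div f (x ∘ Fin.val) (fun _ => hx _) c
    _ = ∑ j ∈ range n, x j / x (j + d j) := by
        rw [← Fin.sum_univ_eq_sum_range]
        simp only [f, hper.map_mod_nat]

theorem chord_le_rpow {κ t u v : ℝ} (hκ : 1 < κ) (ht : 0 ≤ t) (hu : 0 ≤ u) (htu : t + u = 1)
    (hv₀ : 1 / κ ≤ v) (hv₁ : v ≤ 1) :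
    (κ - κ ^ t) / (κ - 1) * v + (κ ^ t - 1) / (κ - 1) ≤ v ^ u := by
  have hκ₀ : 0 < κ := by linarith
  have hκ₁ : 0 < κ - 1 := by linarith
  have hκv : 1 ≤ κ * v := by rwa [div_le_iff₀' hκ₀] at hv₀
  have hconcave := (Real.concaveOn_rpow hu (by linarith)).2
    (Set.mem_Ici.2 (by positivity : (0 : ℝ) ≤ 1 / κ)) (Set.mem_Ici.2 zero_le_one)
    (div_nonneg (by nlinarith) hκ₁.le : 0 ≤ κ * (1 - v) / (κ - 1))
    (div_nonneg (by linarith) hκ₁.le : 0 ≤ (κ * v - 1) / (κ - 1)) (by field_simp; ring)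
  have hκu : (1 / κ) ^ u = κ ^ t / κ := by
    rw [Real.div_rpow zero_le_one hκ₀.le, Real.one_rpow, eq_div_iff hκ₀.ne', div_mul_eq_mul_div,
      one_mul, div_eq_iff (by positivity), ← Real.rpow_add hκ₀, htu, Real.rpow_one]
  have hv : κ * (1 - v) / (κ - 1) * (1 / κ) + (κ * v - 1) / (κ - 1) * 1 = v := by
    field_simp; ring
  simp only [smul_eq_mul, hv, hκu, Real.one_rpow] at hconcave
  calc (κ - κ ^ t) / (κ - 1) * v + (κ ^ t - 1) / (κ - 1)
      = κ * (1 - v) / (κ - 1) * (κ ^ t / κ) + (κ * v - 1) / (κ - 1) * 1 := by field_simp; ring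
    _ ≤ v ^ u := hconcave

theorem sum_rpow_le_sum_mul_rpow_sub_one {ι : Type*} {s : Finset ι} {w : ι → ℝ} {m p : ℝ}
    (hw : ∀ i ∈ s, 0 ≤ w i) (hm : ∀ i ∈ s, w i ≤ m) (hp : 1 ≤ p) :
    ∑ i ∈ s, w i ^ p ≤ (∑ i ∈ s, w i) * m ^ (p - 1) := by
  rw [sum_mul]
  refine sum_le_sum fun i hi => ?_
  calc w i ^ p = w i * w i ^ (p - 1) := by
        rw [← Real.rpow_one_add' (hw i hi) (by linarith), add_sub_cancel]
    _ ≤ w i * m ^ (p - 1) :=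
        mul_le_mul_of_nonneg_left (Real.rpow_le_rpow (hw i hi) (hm i hi) (by linarith)) (hw i hi)

theorem chord_div_add_div_le {κ t u a m : ℝ} (hκ : 1 < κ) (ht : 0 ≤ t) (hu : 0 ≤ u)
    (htu : t + u = 1) (ha : 0 < a) (ham : a ≤ m) (hma : m ≤ κ * a) :
    (κ - κ ^ t) / (κ - 1) / m + (κ ^ t - 1) / (κ - 1) / a ≤ 1 / (a ^ t * m ^ u) := by
  have hm : 0 < m := ha.trans_le ham
  have hv₀ : 1 / κ ≤ a / m := by
    rw [div_le_div_iff₀ (by linarith) hm]; linarith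
  calc (κ - κ ^ t) / (κ - 1) / m + (κ ^ t - 1) / (κ - 1) / a
      = ((κ - κ ^ t) / (κ - 1) * (a / m) + (κ ^ t - 1) / (κ - 1)) / a := by
        field_simp
    _ ≤ (a / m) ^ u / a := by
        gcongr; exact chord_le_rpow hκ ht hu htu hv₀ ((div_le_one hm).2 ham)
    _ = 1 / (a ^ t * m ^ u) := by
        rw [Real.div_rpow ha.le hm.le, div_div, div_eq_div_iff (by positivity) (by positivity),
          one_mul, ← mul_assoc, ← Real.rpow_add ha, add_comm u t, htu, Real.rpow_one, mul_comm]

theorem chord_div_add_mul_div_sum_le_inv_powerMean {k : ℕ} (hk : 1 < k) {p q : ℝ} (hp : 1 < p)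
    (hpq : 1 / p + 1 / q = 1) (w : ℕ → ℝ) (hw : ∀ i, 0 < w i) {i₀ : ℕ} (hi₀ : i₀ < k)
    (hmax : ∀ i < k, w i ≤ w i₀) :
    ((k : ℝ) - k ^ (1 / p)) / (k - 1) / w i₀ +
        ((k : ℝ) ^ (1 / p) - 1) / (k - 1) * (k / ∑ i ∈ range k, w i) ≤
      1 / ((∑ i ∈ range k, w i ^ p) / k) ^ (1 / p) := by
  have hk₀ : (0 : ℝ) < k := by positivity
  have hq : 1 / q = (p - 1) * (1 / p) := by
    rw [mul_one_div, sub_div, div_self (by positivity)]; linarith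
  have hq₀ : 0 ≤ 1 / q := by rw [hq]; exact mul_nonneg (by linarith) (by positivity)
  have hsum_rpow : 0 < ∑ i ∈ range k, w i ^ p :=
    sum_pos (fun i _ => Real.rpow_pos_of_pos (hw i) p) ⟨i₀, mem_range.2 hi₀⟩
  have hsum : 0 < ∑ i ∈ range k, w i := sum_pos (fun i _ => hw i) ⟨i₀, mem_range.2 hi₀⟩
  have hmean_le_max : (∑ i ∈ range k, w i) / k ≤ w i₀ := by
    rw [div_le_iff₀ hk₀]
    simpa [mul_comm] using sum_le_card_nsmul (range k) w (w i₀) fun i hi => hmax i (mem_range.1 hi)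
  have hmax_le_sum : w i₀ ≤ k * ((∑ i ∈ range k, w i) / k) := by
    rw [mul_div_cancel₀ _ hk₀.ne']
    exact single_le_sum (fun i _ => (hw i).le) (mem_range.2 hi₀)
  have hpowerMean : ((∑ i ∈ range k, w i ^ p) / k) ^ (1 / p) ≤
      ((∑ i ∈ range k, w i) / k) ^ (1 / p) * w i₀ ^ (1 / q) := by
    calc ((∑ i ∈ range k, w i ^ p) / k) ^ (1 / p)
        ≤ ((∑ i ∈ range k, w i) * w i₀ ^ (p - 1) / k) ^ (1 / p) := by
          gcongr
          exact sum_rpow_le_sum_mul_rpow_sub_one (fun i _ => (hw i).le)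
              (fun i hi => hmax i (mem_range.1 hi)) hp.le
      _ = _ := by
          rw [mul_div_right_comm,
            Real.mul_rpow (by positivity) (Real.rpow_pos_of_pos (hw i₀) _).le,
            ← Real.rpow_mul (hw i₀).le, hq]
  calc _ = ((k : ℝ) - k ^ (1 / p)) / (k - 1) / w i₀ +
        ((k : ℝ) ^ (1 / p) - 1) / (k - 1) / ((∑ i ∈ range k, w i) / k) := by
        rw [div_div_eq_mul_div, mul_div_assoc]
    _ ≤ 1 / (((∑ i ∈ range k, w i) / k) ^ (1 / p) * w i₀ ^ (1 / q)) :=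
        chord_div_add_div_le (by exact_mod_cast hk) (by positivity) hq₀ hpq (by positivity)
          hmean_le_max hmax_le_sum
    _ ≤ _ :=
        one_div_le_one_div_of_le (Real.rpow_pos_of_pos (div_pos hsum_rpow hk₀) _) hpowerMean

theorem chord_geom_mean_eq {κ t u n B : ℝ} (hκ : 1 < κ) (ht : 0 < t) (hu : 0 < u)
    (htu : t + u = 1) (hn : 0 ≤ n) (hB : 0 ≤ B) :
    ((κ - κ ^ t) / (κ - 1) * (n / κ) / u) ^ u * ((κ ^ t - 1) / (κ - 1) * (n * B) / t) ^ t =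
      n * B ^ t * (κ ^ (-u ^ 2) / (κ - 1)) * ((κ ^ t - 1) ^ t * t ^ (-t)) *
        ((κ ^ u - 1) ^ u * u ^ (-u)) := by
  have hκ₀ : 0 < κ := by linarith
  have hκtu : κ ^ t * κ ^ u = κ := by rw [← Real.rpow_add hκ₀, htu, Real.rpow_one]
  have hcu : 0 ≤ κ ^ u - 1 := by linarith [Real.one_le_rpow hκ.le hu.le]
  have hct : 0 ≤ κ ^ t - 1 := by linarith [Real.one_le_rpow hκ.le ht.le]
  have hκ₁ : 0 < κ - 1 := by linarith
  have hslope : (κ - κ ^ t) / (κ - 1) * (n / κ) / u =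
      n * κ ^ (-u) * (κ ^ u - 1) * (κ - 1)⁻¹ * u⁻¹ := by
    rw [show -u = t - 1 by linarith, Real.rpow_sub_one hκ₀.ne']
    field_simp
    linear_combination -n * hκtu
  rw [hslope, show (κ ^ t - 1) / (κ - 1) * (n * B) / t =
    n * B * (κ ^ t - 1) * (κ - 1)⁻¹ * t⁻¹ by ring]
  generalize κ ^ t - 1 = c₂ at hct ⊢
  generalize κ ^ u - 1 = c₁ at hcu ⊢
  simp (disch := positivity) only [Real.mul_rpow, Real.inv_rpow]
  have hn' : n ^ u * n ^ t = n := by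
    rw [← Real.rpow_add' hn (by linarith), add_comm, htu, Real.rpow_one]
  have hκ' : (κ - 1) ^ u * (κ - 1) ^ t = κ - 1 := by
    rw [← Real.rpow_add hκ₁, add_comm, htu, Real.rpow_one]
  calc _ = (n ^ u * n ^ t) * ((κ - 1) ^ u * (κ - 1) ^ t)⁻¹ * (κ ^ (-u)) ^ u * B ^ t *
        c₂ ^ t * (t ^ t)⁻¹ * c₁ ^ u * (u ^ u)⁻¹ := by ring
    _ = _ := by
      rw [hn', hκ', ← Real.rpow_mul hκ₀.le, Real.rpow_neg ht.le, Real.rpow_neg hu.le,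
        neg_mul, ← sq]
      ring

theorem le_chord_combination {κ t u n B X Y : ℝ} (hκ : 1 < κ) (ht : 0 < t) (hu : 0 < u)
    (htu : t + u = 1) (hn : 0 ≤ n) (hB : 0 ≤ B) (hX : n / κ ≤ X) (hY : n * B ≤ Y) :
    n * B ^ t * (κ ^ (-u ^ 2) / (κ - 1)) * ((κ ^ t - 1) ^ t * t ^ (-t)) *
        ((κ ^ u - 1) ^ u * u ^ (-u)) ≤
      (κ - κ ^ t) / (κ - 1) * X + (κ ^ t - 1) / (κ - 1) * Y := by
  have hκ₁ : 0 < κ - 1 := by linarith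
  have hα : 0 ≤ (κ - κ ^ t) / (κ - 1) := by
    have := Real.rpow_le_rpow_of_exponent_le hκ.le (by linarith : t ≤ 1)
    rw [Real.rpow_one] at this
    exact div_nonneg (by linarith) hκ₁.le
  have hβ : 0 ≤ (κ ^ t - 1) / (κ - 1) :=
    div_nonneg (by linarith [Real.one_le_rpow hκ.le ht.le]) hκ₁.le
  rw [← chord_geom_mean_eq hκ ht hu htu hn hB]
  calc _ ≤ u * ((κ - κ ^ t) / (κ - 1) * (n / κ) / u) +
        t * ((κ ^ t - 1) / (κ - 1) * (n * B) / t) :=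
        Real.geom_mean_le_arith_mean2_weighted hu.le ht.le (by positivity) (by positivity)
          (by linarith)
    _ = (κ - κ ^ t) / (κ - 1) * (n / κ) + (κ ^ t - 1) / (κ - 1) * (n * B) := by
        field_simp
    _ ≤ _ := by gcongr

def dianandaMeans (k : ℕ) : Set ℝ :=
  { S : ℝ | ∃ n : ℕ, k ≤ n ∧ ∃ x : ℕ → ℝ, (∀ j, 0 < x j) ∧
    (∀ j, x (j + n) = x j) ∧
    S = ((1 : ℝ) / n) * k * ∑ j ∈ Finset.range n, x j / (∑ i ∈ Finset.range k, x (j + i + 1)) }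

theorem dianandaMeans_nonneg {k : ℕ} {S : ℝ} (hS : S ∈ dianandaMeans k) : 0 ≤ S := by
  obtain ⟨n, -, x, hx, -, rfl⟩ := hS
  exact mul_nonneg (by positivity)
    (sum_nonneg fun j _ => div_nonneg (hx j).le (sum_nonneg fun i _ => (hx _).le))

theorem natCast_mul_sInf_dianandaMeans_le {k n : ℕ} (hn : k ≤ n) {x : ℕ → ℝ}
    (hx : ∀ j, 0 < x j) (hper : Periodic x n) :
    n * sInf (dianandaMeans k) ≤ ∑ j ∈ range n, x j * (k / ∑ i ∈ range k, x (j + i + 1)) := by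
  obtain rfl | hn₀ := n.eq_zero_or_pos
  · simp
  calc n * sInf (dianandaMeans k)
      ≤ n * ((1 : ℝ) / n * k * ∑ j ∈ range n, x j / ∑ i ∈ range k, x (j + i + 1)) := by
        gcongr
        exact csInf_le ⟨0, fun _ => dianandaMeans_nonneg⟩ ⟨n, hn, x, hx, hper, rfl⟩
    _ = _ := by
        rw [← mul_assoc, ← mul_assoc, mul_one_div_cancel (by positivity), one_mul, mul_sum]
        exact sum_congr rfl fun j _ => by ring

theorem shapiro_diananda_p_sum_lower_bound (k : ℕ) (hk : 2 ≤ k) (p q : ℝ)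
    (hp : 1 < p) (hpq : 1 / p + 1 / q = 1)
    (B : ℝ)
    (hB : B = sInf { S : ℝ | ∃ n : ℕ, k ≤ n ∧ ∃ x : ℕ → ℝ, (∀ j, 0 < x j) ∧
            (∀ j, x (j + n) = x j) ∧
            S = ((1 : ℝ) / n) * k *
                  ∑ j ∈ Finset.range n, x j / (∑ i ∈ Finset.range k, x (j + i + 1)) })
    (n : ℕ) (hn : k ≤ n) (x : ℕ → ℝ) (hx : ∀ j, 0 < x j) (hper : ∀ j, x (j + n) = x j) :
    ∑ j ∈ Finset.range n,
        x j / (((∑ i ∈ Finset.range k, (x (j + i + 1)) ^ p) / (k : ℝ)) ^ ((1 : ℝ) / p)) ≥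
      (n : ℝ) * B ^ ((1 : ℝ) / p) *
        ((k : ℝ) ^ (-(1 / q ^ 2)) / ((k : ℝ) - 1)) *
        (((k : ℝ) ^ (1 / p) - 1) ^ (1 / p) * (1 / p) ^ (-(1 / p))) *
        (((k : ℝ) ^ (1 / q) - 1) ^ (1 / q) * (1 / q) ^ (-(1 / q))) := by
  change B = sInf (dianandaMeans k) at hB
  have hp' : 0 < 1 / p := by positivity
  have hq' : 0 < 1 / q := by linarith [(div_lt_one (by positivity : (0 : ℝ) < p)).2 hp]
  choose I hI hImax using fun j => exists_max_image (range k) (fun i => x (j + i + 1))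
    ⟨0, mem_range.2 (by omega)⟩
  have hcycle := natCast_div_le_sum_div_add (by omega) hx hper (fun j => I j + 1)
    (fun _ => Nat.succ_pos _) (fun j => mem_range.1 (hI j))
  rw [ge_iff_le, ← one_div_pow, hB]
  calc _ ≤ ((k : ℝ) - k ^ (1 / p)) / (k - 1) * ∑ j ∈ range n, x j / x (j + (I j + 1)) +
        ((k : ℝ) ^ (1 / p) - 1) / (k - 1) *
          ∑ j ∈ range n, x j * (k / ∑ i ∈ range k, x (j + i + 1)) :=
        le_chord_combination (by exact_mod_cast hk) hp' hq' hpq n.cast_nonneg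
          (Real.sInf_nonneg fun _ => dianandaMeans_nonneg) hcycle
          (natCast_mul_sInf_dianandaMeans_le hn hx hper)
    _ = ∑ j ∈ range n, x j * (((k : ℝ) - k ^ (1 / p)) / (k - 1) / x (j + I j + 1) +
          ((k : ℝ) ^ (1 / p) - 1) / (k - 1) * (k / ∑ i ∈ range k, x (j + i + 1))) := by
        simp only [mul_sum, ← sum_add_distrib, add_assoc]
        exact sum_congr rfl fun j _ => by ring
    _ ≤ _ := sum_le_sum fun j _ => (mul_le_mul_of_nonneg_left
        (chord_div_add_mul_div_sum_le_inv_powerMean (by omega) hp hpq (fun i => x (j + i + 1))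
          (fun i => hx _) (mem_range.1 (hI j)) fun i hi => hImax j i (mem_range.2 hi))
        (hx j).le).trans_eq (mul_one_div _ _)
end

section
/- For every real r > 1 and every real x with 0 < x ≤ r − 1, the strict inequality ln(ln(r − ln r)) < ln x + ln(r − x)/x holds; that is, ln ln(r − ln r) is a strict lower bound for min_{0 < x ≤ r−1} ( ln x + ln(r − x)/x ). -/
theorem log_log_lower_bound (r : ℝ) (hr : 1 < r) (x : ℝ) (hx : 0 < x) (hxr : x ≤ r - 1) :
    Real.log (Real.log (r - Real.log r)) < Real.log x + Real.log (r - x) / x := by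
  have hlogr : 0 < Real.log r := Real.log_pos hr
  have hlr : Real.log r < r - 1 := Real.log_lt_sub_one_of_pos (by linarith) hr.ne'
  have h1 : 1 < r - Real.log r := by linarith
  set L := Real.log (r - Real.log r) with hLdef
  have hL0 : 0 < L := Real.log_pos h1
  have hLlt : L < Real.log r := Real.log_lt_log (by linarith) (by linarith)
  rcases le_or_gt x L with hcase | hcase
  · -- x ≤ L : then x < log r, so log (r - x) > L, and log L - log x = log (L/x) < L/x
    have hxlog : x < Real.log r := lt_of_le_of_lt hcase hLlt
    have h2 : L < Real.log (r - x) := Real.log_lt_log (by linarith) (by linarith)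
    have h3 : L / x < Real.log (r - x) / x := by
      exact (div_lt_div_iff_of_pos_right hx).mpr h2
    have h5 : Real.log (L / x) ≤ L / x - 1 := Real.log_le_sub_one_of_pos (div_pos hL0 hx)
    rw [Real.log_div hL0.ne' hx.ne'] at h5
    linarith
  · -- L < x : log L < log x and log (r - x) ≥ 0
    have h2 : Real.log L < Real.log x := Real.log_lt_log hL0 hcase
    have h3 : 0 ≤ Real.log (r - x) := Real.log_nonneg (by linarith)
    have h4 : 0 ≤ Real.log (r - x) / x := div_nonneg h3 hx.le
    linarith
end

section
/- Let V be a finite nonempty set and E a relation on V (a directed graph) that is strongly connected, meaning for all vertices u, v (including u = v) there is a directed path of positive length from u to v. Let g be the girth of (V, E): the least integer ℓ ≥ 1 such that there exist vertices v_0, v_1, …, v_ℓ with v_ℓ = v_0 and E(v_i, v_{i+1}) for each 0 ≤ i < ℓ. Then the infimum, over all positive vectors x : V → ℝ, of the max-sum Σ_{v ∈ V} x_v / max{ x_{v'} : E(v, v') } equals g; i.e., g is the greatest lower bound of the set of values of this sum. -/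
open Finset

lemma exists_walk' {V : Type*} (E : V → V → Prop) {u v : V}
    (hw : Relation.TransGen E u v) :
    ∃ m : ℕ, 1 ≤ m ∧ ∃ p : ℕ → V, p 0 = u ∧ p m = v ∧ ∀ i < m, E (p i) (p (i+1)) := by
  induction hw with
  | @single b e =>
      refine ⟨1, le_refl _, fun i => if i = 0 then u else b, by simp, by simp, ?_⟩
      intro i hi
      interval_cases i
      simpa using e
  | @tail b c _ e ih =>
      obtain ⟨m, hm1, p, hp0, hpm, hpe⟩ := ih
      refine ⟨m + 1, by omega, fun i => if i ≤ m then p i else c, by simpa using hp0,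
        by simp, ?_⟩
      intro i hi
      rcases lt_or_ge i m with h | h
      · simp only [if_pos (by omega : i ≤ m), if_pos (by omega : i + 1 ≤ m)]
        exact hpe i h
      · have hi' : i = m := by omega
        subst hi'
        simp only [if_pos le_rfl, if_neg (by omega : ¬ i + 1 ≤ i), hpm]
        exact e

lemma cycle_sum_ge {ℓ : ℕ} {a : ℕ → ℝ} (hpos : ∀ k, 0 < a k)
    (hcyc : a ℓ = a 0) : (ℓ:ℝ) ≤ ∑ k ∈ Finset.range ℓ, a k / a (k+1) := by
  have h1 : ∀ k, 1 + (Real.log (a k) - Real.log (a (k+1))) ≤ a k / a (k+1) := by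
    intro k
    have h := Real.log_le_sub_one_of_pos (div_pos (hpos k) (hpos (k+1)))
    rw [Real.log_div (ne_of_gt (hpos k)) (ne_of_gt (hpos (k+1)))] at h
    linarith
  calc (ℓ:ℝ) = ∑ k ∈ Finset.range ℓ, (1 + (Real.log (a k) - Real.log (a (k+1)))) := by
        rw [Finset.sum_add_distrib, Finset.sum_range_sub' (fun k => Real.log (a k)), hcyc]
        simp
    _ ≤ _ := Finset.sum_le_sum (fun k _ => h1 k)

lemma lower_bd {V : Type*} [Fintype V] [Nonempty V]
    (E : V → V → Prop) (hsc : ∀ u v : V, Relation.TransGen E u v)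
    (g : ℕ)
    (hg : IsLeast { ℓ : ℕ | 1 ≤ ℓ ∧ ∃ f : ℕ → V, f ℓ = f 0 ∧
            ∀ i < ℓ, E (f i) (f (i + 1)) } g)
    (x : V → ℝ) (hx : ∀ v, 0 < x v) :
    (g:ℝ) ≤ ∑ v : V, x v / sSup (x '' { v' | E v v' }) := by
  classical
  set M : V → ℝ := fun v => sSup (x '' { v' | E v v' }) with hM
  have hne : ∀ v : V, { v' | E v v' }.Nonempty := by
    intro v
    obtain ⟨w, hw, -⟩ := Relation.TransGen.head'_iff.mp (hsc v v)
    exact ⟨w, hw⟩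
  have hσ : ∀ v : V, ∃ w, E v w ∧ x w = M v := by
    intro v
    have hfin : (x '' { v' | E v v' }).Finite := Set.toFinite _
    have hmem := ((hne v).image x).csSup_mem hfin
    obtain ⟨w, hw, hxw⟩ := hmem
    exact ⟨w, hw, hxw⟩
  choose σ hσE hσx using hσ
  have hMpos : ∀ v, 0 < M v := fun v => (hσx v) ▸ hx (σ v)
  -- find a periodic point
  obtain ⟨u0⟩ := ‹Nonempty V›
  obtain ⟨i, j, hne', hij⟩ := Fintype.exists_ne_map_eq_of_card_lt
    (fun k : Fin (Fintype.card V + 1) => σ^[k] u0) (by simp)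

  have hvne : (i:ℕ) ≠ (j:ℕ) := fun h => hne' (Fin.ext h)
  have hper : ∃ m : ℕ, 1 ≤ m ∧ ∃ u : V, σ^[m] u = u := by
    rcases Nat.lt_or_ge (i:ℕ) (j:ℕ) with h | h
    · refine ⟨(j:ℕ) - i, by omega, σ^[(i:ℕ)] u0, ?_⟩
      rw [← Function.iterate_add_apply, Nat.sub_add_cancel (le_of_lt h), ← hij]
    · have h' : (j:ℕ) < i := by omega
      refine ⟨(i:ℕ) - j, by omega, σ^[(j:ℕ)] u0, ?_⟩
      rw [← Function.iterate_add_apply, Nat.sub_add_cancel h'.le, hij]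
  obtain ⟨m0, hm0, u, hu⟩ := hper
  set P : ℕ → Prop := fun m => 1 ≤ m ∧ σ^[m] u = u with hP
  have hPex : ∃ m, P m := ⟨m0, hm0, hu⟩
  set ℓ : ℕ := Nat.find hPex with hℓdef
  obtain ⟨hℓ1, hℓcyc⟩ : P ℓ := Nat.find_spec hPex
  -- injectivity on range ℓ
  have hinj : ∀ a ∈ range ℓ, ∀ b ∈ range ℓ, σ^[a] u = σ^[b] u → a = b := by
    have key : ∀ a b, a < b → b < ℓ → σ^[a] u = σ^[b] u → False := by
      intro a b hab hbℓ heq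
      have : σ^[(ℓ - b) + a] u = u := by
        rw [Function.iterate_add_apply, heq, ← Function.iterate_add_apply,
          Nat.sub_add_cancel hbℓ.le, hℓcyc]
      exact Nat.find_min hPex (by omega : (ℓ - b) + a < ℓ) ⟨by omega, this⟩
    intro a ha b hb heq
    simp only [mem_range] at ha hb
    rcases lt_trichotomy a b with h | h | h
    · exact absurd (key a b h hb heq) (fun h => h)
    · exact h
    · exact absurd (key b a h ha heq.symm) (fun h => h)
  -- g ≤ ℓ
  have hgℓ : g ≤ ℓ := by
    apply hg.2
    refine ⟨hℓ1, fun k => σ^[k] u, hℓcyc, ?_⟩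
    intro k _
    show E (σ^[k] u) (σ^[k+1] u)
    rw [Function.iterate_succ_apply']
    exact hσE _
  -- sum over cycle
  have hterm : ∀ v : V, 0 ≤ x v / M v := fun v => le_of_lt (div_pos (hx v) (hMpos v))
  have hsub : (range ℓ).image (fun k => σ^[k] u) ⊆ univ := subset_univ _
  have h1 : ∑ v ∈ (range ℓ).image (fun k => σ^[k] u), x v / M v ≤ ∑ v : V, x v / M v :=
    Finset.sum_le_sum_of_subset_of_nonneg hsub (fun v _ _ => hterm v)
  have h2 : ∑ v ∈ (range ℓ).image (fun k => σ^[k] u), x v / M v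
      = ∑ k ∈ range ℓ, x (σ^[k] u) / M (σ^[k] u) := Finset.sum_image hinj
  have h3 : ∀ k, M (σ^[k] u) = x (σ^[k+1] u) := by
    intro k
    rw [Function.iterate_succ_apply', hσx]
  have h4 : (ℓ:ℝ) ≤ ∑ k ∈ range ℓ, x (σ^[k] u) / M (σ^[k] u) := by
    have := cycle_sum_ge (ℓ := ℓ) (a := fun k => x (σ^[k] u)) (fun k => hx _)
      (by simp [hℓcyc])
    refine le_trans this (le_of_eq ?_)
    exact Finset.sum_congr rfl (fun k _ => by rw [h3 k])
  calc (g:ℝ) ≤ (ℓ:ℝ) := by exact_mod_cast hgℓ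
    _ ≤ ∑ k ∈ range ℓ, x (σ^[k] u) / M (σ^[k] u) := h4
    _ = ∑ v ∈ (range ℓ).image (fun k => σ^[k] u), x v / M v := h2.symm
    _ ≤ ∑ v : V, x v / M v := h1

lemma upper_bd {V : Type*} [Fintype V] [Nonempty V]
    (E : V → V → Prop) (hsc : ∀ u v : V, Relation.TransGen E u v)
    (g : ℕ)
    (hg : IsLeast { ℓ : ℕ | 1 ≤ ℓ ∧ ∃ f : ℕ → V, f ℓ = f 0 ∧
            ∀ i < ℓ, E (f i) (f (i + 1)) } g)
    (t : ℝ) (ht0 : 0 < t) (ht1 : t ≤ 1) :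
    ∃ x : V → ℝ, (∀ v, 0 < x v) ∧
      ∑ v : V, x v / sSup (x '' { v' | E v v' }) ≤ (g:ℝ) + (Fintype.card V) * t := by
  classical
  obtain ⟨hg1, f, hf0, hfe⟩ := hg.1
  set Pd : V → ℕ → Prop := fun v m => ∃ p : ℕ → V, p 0 = v ∧ (∃ i < g, f i = p m) ∧
      ∀ i < m, E (p i) (p (i+1)) with hPd
  have hPdex : ∀ v, ∃ m, Pd v m := by
    intro v
    obtain ⟨m, _, p, hp0, hpm, hpe⟩ := exists_walk' E (hsc v (f 0))
    exact ⟨m, p, hp0, ⟨0, hg1, hpm.symm⟩, hpe⟩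
  set d : V → ℕ := fun v => Nat.find (hPdex v) with hd
  set x : V → ℝ := fun v => t ^ d v with hx
  have hxpos : ∀ v, 0 < x v := fun v => pow_pos ht0 _
  have hxle1 : ∀ v, x v ≤ 1 := fun v => pow_le_one₀ ht0.le ht1
  -- d v = 0 for cycle vertices
  have hd0 : ∀ i < g, d (f i) = 0 := by
    intro i hi
    refine Nat.eq_zero_of_le_zero (Nat.find_le ?_)
    exact ⟨fun _ => f i, rfl, ⟨i, hi, rfl⟩, fun j hj => absurd hj (Nat.not_lt_zero j)⟩
  have hBdd : ∀ v : V, BddAbove (x '' { v' | E v v' }) := fun v =>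
    (Set.toFinite _).bddAbove
  -- key bound per vertex
  have hterm : ∀ v : V, x v / sSup (x '' { v' | E v v' }) ≤ if d v = 0 then 1 else t := by
    intro v
    obtain ⟨p, hp0, ⟨i, hi, hpm⟩, hpe⟩ : Pd v (d v) := Nat.find_spec (hPdex v)
    by_cases h0 : d v = 0
    · -- v on the cycle
      rw [h0] at hpm
      have hv : f i = v := by rw [hpm, hp0]
      -- successor on the cycle
      have hsucc : ∃ j < g, f j = f (i + 1) := by
        rcases Nat.lt_or_ge (i+1) g with h | h
        · exact ⟨i+1, h, rfl⟩
        · have : i + 1 = g := by omega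
          exact ⟨0, hg1, by rw [← this] at hf0; exact hf0.symm⟩
      obtain ⟨j, hj, hfj⟩ := hsucc
      have hEv : E v (f (i+1)) := hv ▸ hfe i hi
      have hxsucc : x (f (i+1)) = 1 := by
        have : d (f (i+1)) = 0 := by rw [← hfj]; exact hd0 j hj
        simp [hx, this]
      have hM1 : (1:ℝ) ≤ sSup (x '' { v' | E v v' }) := by
        rw [← hxsucc]
        exact le_csSup (hBdd v) ⟨f (i+1), hEv, rfl⟩
      rw [if_pos h0]
      have hxv : x v = 1 := by simp [hx, h0]
      rw [hxv, div_le_one (lt_of_lt_of_le one_pos hM1)]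
      exact hM1
    · -- off-cycle vertex
      rw [if_neg h0]
      have hdv1 : 1 ≤ d v := Nat.one_le_iff_ne_zero.mpr h0
      have hEv : E v (p 1) := hp0 ▸ hpe 0 hdv1
      have hdp1 : d (p 1) ≤ d v - 1 := by
        refine Nat.find_le ⟨fun k => p (k+1), rfl, ⟨i, hi, ?_⟩, ?_⟩
        · show f i = p (d v - 1 + 1)
          rw [Nat.sub_add_cancel hdv1]; exact hpm
        · intro k hk
          exact hpe (k+1) (by omega)
      have hxp1 : t ^ (d v - 1) ≤ x (p 1) :=
        pow_le_pow_of_le_one ht0.le ht1 hdp1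
      have hM : t ^ (d v - 1) ≤ sSup (x '' { v' | E v v' }) :=
        le_trans hxp1 (le_csSup (hBdd v) ⟨p 1, hEv, rfl⟩)
      have hMpos : (0:ℝ) < t ^ (d v - 1) := pow_pos ht0 _
      calc x v / sSup (x '' { v' | E v v' }) ≤ x v / t ^ (d v - 1) :=
            div_le_div_of_nonneg_left (hxpos v).le hMpos hM
        _ = t := by
            show t ^ d v / t ^ (d v - 1) = t
            obtain ⟨m, hm⟩ : ∃ m, d v = m + 1 := ⟨d v - 1, by omega⟩
            rw [hm, Nat.add_sub_cancel, pow_succ]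
            exact mul_div_cancel_left₀ t (pow_ne_zero m ht0.ne')
  refine ⟨x, hxpos, ?_⟩
  have hsum : ∑ v : V, x v / sSup (x '' { v' | E v v' })
      ≤ ∑ v : V, (if d v = 0 then (1:ℝ) else t) :=
    Finset.sum_le_sum (fun v _ => hterm v)
  refine le_trans hsum ?_
  rw [← Finset.sum_filter_add_sum_filter_not univ (fun v => d v = 0)]
  have hA : ∑ v ∈ univ.filter (fun v => d v = 0), (if d v = 0 then (1:ℝ) else t)
      = (univ.filter (fun v => d v = 0)).card := by
    rw [Finset.sum_congr rfl (fun v hv => if_pos (Finset.mem_filter.mp hv).2)]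
    simp
  have hB : ∑ v ∈ univ.filter (fun v => ¬ d v = 0), (if d v = 0 then (1:ℝ) else t)
      = (univ.filter (fun v => ¬ d v = 0)).card * t := by
    rw [Finset.sum_congr rfl (fun v hv => if_neg (Finset.mem_filter.mp hv).2)]
    simp [mul_comm]
  rw [hA, hB]
  have hcardA : (univ.filter (fun v => d v = 0)).card ≤ g := by
    have hsubset : univ.filter (fun v => d v = 0) ⊆ (range g).image f := by
      intro v hv
      have h0 := (Finset.mem_filter.mp hv).2
      obtain ⟨p, hp0, ⟨i, hi, hpm⟩, -⟩ : Pd v (d v) := Nat.find_spec (hPdex v)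
      rw [h0] at hpm
      exact Finset.mem_image.mpr ⟨i, Finset.mem_range.mpr hi, by rw [hpm, hp0]⟩
    calc (univ.filter (fun v => d v = 0)).card ≤ ((range g).image f).card :=
          Finset.card_le_card hsubset
      _ ≤ g := le_trans Finset.card_image_le (by simp)
  have hcardB : ((univ.filter (fun v => ¬ d v = 0)).card : ℝ) ≤ Fintype.card V := by
    exact_mod_cast Finset.card_le_card (Finset.subset_univ _)
  have := mul_le_mul_of_nonneg_right hcardB ht0.le
  have hcardA' : ((univ.filter (fun v => d v = 0)).card : ℝ) ≤ (g:ℝ) := by exact_mod_cast hcardA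
  linarith

theorem graphic_max_sum_eq_girth {V : Type*} [Fintype V] [Nonempty V]
    (E : V → V → Prop) (hsc : ∀ u v : V, Relation.TransGen E u v)
    (g : ℕ)
    (hg : IsLeast { ℓ : ℕ | 1 ≤ ℓ ∧ ∃ f : ℕ → V, f ℓ = f 0 ∧
            ∀ i < ℓ, E (f i) (f (i + 1)) } g) :
    IsGLB
      { S : ℝ | ∃ x : V → ℝ, (∀ v, 0 < x v) ∧
          S = ∑ v : V, x v / sSup (x '' { v' | E v v' }) }
      (g : ℝ) := by
  constructor
  · rintro S ⟨x, hx, rfl⟩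
    exact lower_bd E hsc g hg x hx
  · intro b hb
    refine le_of_forall_pos_le_add ?_
    intro ε hε
    set n : ℝ := (Fintype.card V : ℝ) with hn'
    have hn : 1 ≤ n := by
      rw [hn']
      exact_mod_cast Fintype.card_pos
    set t : ℝ := min (ε / n) 1 with ht'
    have ht0 : 0 < t := lt_min (div_pos hε (by linarith)) one_pos
    have ht1 : t ≤ 1 := min_le_right _ _
    obtain ⟨x, hxpos, hle⟩ := upper_bd E hsc g hg t ht0 ht1
    have hb' := hb ⟨x, hxpos, rfl⟩
    have hnt : n * t ≤ ε := by
      calc n * t ≤ n * (ε / n) := mul_le_mul_of_nonneg_left (min_le_left _ _) (by linarith)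
        _ = ε := by field_simp
    linarith
end

section
/- Let V be a finite nonempty set, let E be a relation on V that is strongly connected (for all u, v there is a directed path of positive length from u to v), and let w : V × V → ℝ assign a positive weight w(u,v) > 0 to every edge (u,v) with E(u,v). Consider S(y) = Σ_{(u,v) : E(u,v)} w(u,v) · y_u / y_v over vectors y : V → ℝ with all components positive. Then there exists a positive vector y minimizing S over all positive vectors, and the minimizer is unique up to a positive scalar multiple: if y and y' are both positive minimizers, then there exists c > 0 with y' = c · y. -/
theorem monomial_quotient_sum_unique_minimizer {V : Type*} [Fintype V] [Nonempty V]
    (E : V → V → Prop) [DecidableRel E]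
    (hsc : ∀ u v : V, Relation.TransGen E u v)
    (w : V → V → ℝ) (hw : ∀ u v, E u v → 0 < w u v)
    (S : (V → ℝ) → ℝ)
    (hS : ∀ y : V → ℝ,
      S y = ∑ u : V, ∑ v : V, if E u v then w u v * (y u / y v) else 0) :
    (∃ y : V → ℝ, (∀ v, 0 < y v) ∧ ∀ z : V → ℝ, (∀ v, 0 < z v) → S y ≤ S z) ∧
      (∀ y y' : V → ℝ, (∀ v, 0 < y v) → (∀ v, 0 < y' v) →
        (∀ z : V → ℝ, (∀ v, 0 < z v) → S y ≤ S z) →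
        (∀ z : V → ℝ, (∀ v, 0 < z v) → S y' ≤ S z) →
        ∃ c : ℝ, 0 < c ∧ ∀ v, y' v = c * y v) := by
  classical
  set edges : Finset (V × V) := Finset.univ.filter (fun p : V × V => E p.1 p.2) with hedges
  have hmem : ∀ p : V × V, p ∈ edges ↔ E p.1 p.2 := by
    intro p; simp [hedges]
  have hne : edges.Nonempty := by
    obtain ⟨v⟩ := (inferInstance : Nonempty V)
    rcases (hsc v v) with h | ⟨_, h⟩
    · exact ⟨(v, _), (hmem _).mpr h⟩
    · exact ⟨(_, v), (hmem _).mpr h⟩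
  have hST : ∀ y : V → ℝ, S y = ∑ p ∈ edges, w p.1 p.2 * (y p.1 / y p.2) := by
    intro y
    rw [hS, ← Finset.sum_product', hedges, Finset.sum_filter, Finset.univ_product_univ]
  have hwpos : ∀ p ∈ edges, 0 < w p.1 p.2 := fun p hp => hw _ _ ((hmem p).mp hp)
  have htpos : ∀ (z : V → ℝ), (∀ v, 0 < z v) → ∀ p ∈ edges,
      0 < w p.1 p.2 * (z p.1 / z p.2) :=
    fun z hz p hp => mul_pos (hwpos p hp) (div_pos (hz _) (hz _))
  have hterm_le : ∀ (z : V → ℝ), (∀ v, 0 < z v) → ∀ p ∈ edges,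
      w p.1 p.2 * (z p.1 / z p.2) ≤ S z := by
    intro z hz p hp
    rw [hST]
    exact Finset.single_le_sum (fun q hq => (htpos z hz q hq).le) hp
  have hSpos : ∀ (z : V → ℝ), (∀ v, 0 < z v) → 0 < S z := by
    intro z hz
    obtain ⟨p, hp⟩ := hne
    exact lt_of_lt_of_le (htpos z hz p hp) (hterm_le z hz p hp)
  have hscale : ∀ (z : V → ℝ) (c : ℝ), 0 < c → S (fun v => c * z v) = S z := by
    intro z c hc
    rw [hST, hST]
    exact Finset.sum_congr rfl fun p _ => by rw [mul_div_mul_left _ _ hc.ne']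
  -- M, wm, ρ
  set M : ℝ := S (fun _ => 1) with hM
  have hMpos : 0 < M := hSpos _ fun _ => one_pos
  obtain ⟨p0, hp0, hp0min⟩ := Finset.exists_min_image edges (fun p => w p.1 p.2) hne
  set wm : ℝ := w p0.1 p0.2 with hwm
  have hwmpos : 0 < wm := hwpos _ hp0
  have hwmM : wm ≤ M := by
    have := hterm_le (fun _ => 1) (fun _ => one_pos) p0 hp0
    simpa using this
  set ρ : ℝ := wm / M with hρ
  have hρpos : 0 < ρ := div_pos hwmpos hMpos
  have hρ1 : ρ ≤ 1 := (div_le_one hMpos).mpr hwmM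
  -- edge bound
  have hedgeb : ∀ (z : V → ℝ), (∀ v, 0 < z v) → S z ≤ M →
      ∀ p q, E p q → ρ * z p ≤ z q := by
    intro z hz hSz p q hpq
    have hpe : (p, q) ∈ edges := (hmem _).mpr hpq
    have h1 : w p q * (z p / z q) ≤ M := le_trans (hterm_le z hz _ hpe) hSz
    have h2 : w p q * z p ≤ M * z q := by
      rw [← mul_div_assoc] at h1
      exact (div_le_iff₀ (hz q)).mp h1
    have h3 : wm * z p ≤ M * z q :=
      le_trans (mul_le_mul_of_nonneg_right (hp0min _ hpe) (hz p).le) h2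
    rw [hρ, div_mul_eq_mul_div, div_le_iff₀ hMpos]
    linarith [h3]
  -- path bound
  have hpath : ∀ u v : V, ∃ n : ℕ, ∀ z : V → ℝ, (∀ v, 0 < z v) →
      (∀ p q, E p q → ρ * z p ≤ z q) → ρ ^ n * z u ≤ z v := by
    intro u v
    induction hsc u v with
    | single h =>
        exact ⟨1, fun z hz hzb => by simpa [pow_one] using hzb _ _ h⟩
    | tail _ h ih =>
        obtain ⟨n, hn⟩ := ih
        refine ⟨n + 1, fun z hz hzb => ?_⟩
        calc ρ ^ (n + 1) * z u = ρ * (ρ ^ n * z u) := by ring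
          _ ≤ ρ * _ := mul_le_mul_of_nonneg_left (hn z hz hzb) hρpos.le
          _ ≤ _ := hzb _ _ h
  choose N hN using hpath
  set a : ℝ := Finset.univ.inf' (Finset.univ_nonempty (α := V × V))
      (fun p : V × V => ρ ^ N p.1 p.2) with ha
  have hapos : 0 < a := by
    rw [ha, Finset.lt_inf'_iff]
    exact fun p _ => pow_pos hρpos _
  have ha1 : a ≤ 1 := by
    obtain ⟨p, hp⟩ := (Finset.univ_nonempty (α := V × V))
    exact le_trans (Finset.inf'_le _ hp) (pow_le_one₀ hρpos.le hρ1)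
  have haN : ∀ u v : V, a ≤ ρ ^ N u v := fun u v =>
    Finset.inf'_le _ (Finset.mem_univ ((u, v) : V × V))
  -- coercivity
  have hco : ∀ (z : V → ℝ), (∀ v, 0 < z v) → (∀ v, z v ≤ 1) → (∃ u0, z u0 = 1) →
      S z ≤ M → ∀ v, a ≤ z v := by
    intro z hz hz1 ⟨u0, hu0⟩ hSz v
    have := hN u0 v z hz (hedgeb z hz hSz)
    rw [hu0, mul_one] at this
    exact le_trans (haN u0 v) this
  -- compact minimization
  set A : Set (V → ℝ) := Set.Icc (fun _ => a) (fun _ => 1) with hA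
  have hAmem : ∀ z : V → ℝ, z ∈ A ↔ (∀ v, a ≤ z v) ∧ (∀ v, z v ≤ 1) := by
    intro z
    simp [hA, Set.mem_Icc, Pi.le_def]
  have hAc : IsCompact A := isCompact_Icc
  have hAne : A.Nonempty := ⟨fun _ => 1, (hAmem _).mpr ⟨fun _ => ha1, fun _ => le_rfl⟩⟩
  have hcont : ContinuousOn (fun z : V → ℝ => ∑ p ∈ edges, w p.1 p.2 * (z p.1 / z p.2)) A := by
    apply continuousOn_finset_sum
    intro p _
    refine continuousOn_const.mul (ContinuousOn.div
      (continuous_apply p.1).continuousOn (continuous_apply p.2).continuousOn ?_)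
    intro z hz
    have := ((hAmem z).mp hz).1 p.2
    exact (lt_of_lt_of_le hapos this).ne'
  obtain ⟨y, hyA, hymin⟩ := hAc.exists_isMinOn hAne hcont
  have hyApos : ∀ v, 0 < y v := fun v => lt_of_lt_of_le hapos (((hAmem y).mp hyA).1 v)
  have hySmin : ∀ z ∈ A, S y ≤ S z := by
    intro z hz
    rw [hST y, hST z]
    exact hymin hz
  have hglobal : ∀ z : V → ℝ, (∀ v, 0 < z v) → S y ≤ S z := by
    intro z hz
    obtain ⟨u0, _, hu0max⟩ := Finset.exists_max_image Finset.univ z Finset.univ_nonempty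
    have hm : 0 < z u0 := hz u0
    set zt : V → ℝ := fun v => (z u0)⁻¹ * z v with hzt
    have hztS : S zt = S z := hscale z _ (inv_pos.mpr hm)
    have hztpos : ∀ v, 0 < zt v := fun v => mul_pos (inv_pos.mpr hm) (hz v)
    have hzt1 : ∀ v, zt v ≤ 1 := by
      intro v
      rw [hzt]
      rw [inv_mul_le_iff₀ hm, mul_one]
      exact hu0max v (Finset.mem_univ v)
    have hztu0 : zt u0 = 1 := by
      rw [hzt]; field_simp
    by_cases hcase : S zt ≤ M
    · have : zt ∈ A := (hAmem zt).mpr ⟨hco zt hztpos hzt1 ⟨u0, hztu0⟩ hcase, hzt1⟩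
      calc S y ≤ S zt := hySmin zt this
        _ = S z := hztS
    · have h1 : S y ≤ M := hySmin _ ((hAmem _).mpr ⟨fun _ => ha1, fun _ => le_rfl⟩)
      calc S y ≤ M := h1
        _ ≤ S zt := (not_le.mp hcase).le
        _ = S z := hztS
  refine ⟨⟨y, hyApos, hglobal⟩, ?_⟩
  -- uniqueness
  intro y₁ y₂ h1 h2 hmin1 hmin2
  set g : V → ℝ := fun v => Real.sqrt (y₁ v * y₂ v) with hg
  have hgpos : ∀ v, 0 < g v := fun v => Real.sqrt_pos.mpr (mul_pos (h1 v) (h2 v))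
  have hgterm : ∀ p : V × V, g p.1 / g p.2
      = Real.sqrt (y₁ p.1 / y₁ p.2) * Real.sqrt (y₂ p.1 / y₂ p.2) := by
    intro p
    rw [hg, ← Real.sqrt_div (mul_pos (h1 p.1) (h2 p.1)).le, ← Real.sqrt_mul
      (div_pos (h1 p.1) (h1 p.2)).le]
    congr 1
    exact (div_mul_div_comm _ _ _ _).symm
  have heq12 : S y₁ = S y₂ := le_antisymm (hmin1 y₂ h2) (hmin2 y₁ h1)
  have hgle : ∀ p ∈ edges,
      w p.1 p.2 * (g p.1 / g p.2)
        ≤ (w p.1 p.2 * (y₁ p.1 / y₁ p.2) + w p.1 p.2 * (y₂ p.1 / y₂ p.2)) / 2 := by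
    intro p hp
    rw [hgterm p]
    have hA := div_pos (h1 p.1) (h1 p.2)
    have hB := div_pos (h2 p.1) (h2 p.2)
    have hsA := Real.sq_sqrt hA.le
    have hsB := Real.sq_sqrt hB.le
    have hwp := hwpos p hp
    nlinarith [sq_nonneg (Real.sqrt (y₁ p.1 / y₁ p.2) - Real.sqrt (y₂ p.1 / y₂ p.2))]
  have hSg : S g ≤ (S y₁ + S y₂) / 2 := by
    rw [hST g, hST y₁, hST y₂, ← Finset.sum_add_distrib, Finset.sum_div]
    exact Finset.sum_le_sum hgle
  have hSgeq : S g = S y₁ := by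
    have := hmin1 g hgpos
    rw [heq12] at hSg
    linarith
  have hzero : ∑ p ∈ edges,
      ((w p.1 p.2 * (y₁ p.1 / y₁ p.2) + w p.1 p.2 * (y₂ p.1 / y₂ p.2)) / 2
        - w p.1 p.2 * (g p.1 / g p.2)) = 0 := by
    rw [Finset.sum_sub_distrib]
    have e1 : ∑ p ∈ edges, (w p.1 p.2 * (y₁ p.1 / y₁ p.2)
        + w p.1 p.2 * (y₂ p.1 / y₂ p.2)) / 2 = (S y₁ + S y₂) / 2 := by
      rw [hST y₁, hST y₂, ← Finset.sum_add_distrib, Finset.sum_div]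
    rw [e1, ← hST g, hSgeq, heq12]
    ring
  have hAB : ∀ p ∈ edges, y₁ p.1 / y₁ p.2 = y₂ p.1 / y₂ p.2 := by
    intro p hp
    have := (Finset.sum_eq_zero_iff_of_nonneg (fun q hq => by linarith [hgle q hq])).mp hzero p hp
    rw [hgterm p] at this
    have hA := div_pos (h1 p.1) (h1 p.2)
    have hB := div_pos (h2 p.1) (h2 p.2)
    have hsA := Real.sq_sqrt hA.le
    have hsB := Real.sq_sqrt hB.le
    have hwp := hwpos p hp
    have hsq : (Real.sqrt (y₁ p.1 / y₁ p.2) - Real.sqrt (y₂ p.1 / y₂ p.2)) ^ 2 = 0 := by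
      nlinarith
    have := pow_eq_zero_iff (n := 2) (by norm_num) |>.mp hsq
    have heqs : Real.sqrt (y₁ p.1 / y₁ p.2) = Real.sqrt (y₂ p.1 / y₂ p.2) := by linarith
    calc y₁ p.1 / y₁ p.2 = Real.sqrt (y₁ p.1 / y₁ p.2) ^ 2 := hsA.symm
      _ = Real.sqrt (y₂ p.1 / y₂ p.2) ^ 2 := by rw [heqs]
      _ = y₂ p.1 / y₂ p.2 := hsB
  have hrat : ∀ p q, E p q → y₂ p / y₁ p = y₂ q / y₁ q := by
    intro p q hpq
    have := hAB (p, q) ((hmem _).mpr hpq)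
    simp only at this
    rw [div_eq_div_iff (h1 q).ne' (h2 q).ne'] at this
    rw [div_eq_div_iff (h1 p).ne' (h1 q).ne']
    linarith [this]
  have key : ∀ u v : V, y₂ u / y₁ u = y₂ v / y₁ v := by
    intro u v
    induction hsc u v with
    | single h => exact hrat _ _ h
    | tail _ h ih => exact ih.trans (hrat _ _ h)
  obtain ⟨v₁⟩ := (inferInstance : Nonempty V)
  refine ⟨y₂ v₁ / y₁ v₁, div_pos (h2 v₁) (h1 v₁), fun v => ?_⟩
  rw [← key v v₁, div_mul_cancel₀ _ (h1 v).ne']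
end

section
/- Let V be a finite nonempty set, let E be a strongly connected relation on V (for all u, v there is a directed path of positive length from u to v), and let w assign a positive weight w(u,v) > 0 to each edge with E(u,v). Let σ : V → V be a bijection that is an automorphism of the weighted graph: E(u,v) ↔ E(σ(u), σ(v)) for all u, v, and w(σ(u), σ(v)) = w(u,v) whenever E(u,v). Then every positive vector y minimizing S(y) = Σ_{(u,v): E(u,v)} w(u,v) · y_u / y_v over positive vectors is σ-invariant: y_{σ(v)} = y_v for all v ∈ V. -/
/-!
Compare a minimizer `y` with its transform `y ∘ σ`, which has the same sum because `σ` is a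
weighted-graph automorphism, and with their geometric mean `z = √(y · (y ∘ σ))`. Edge by edge,
`z_u / z_v` is the geometric mean of `y_u / y_v` and `y_{σu} / y_{σv}`, so AM-GM gives
`2 S(z) ≤ S(y) + S(y ∘ σ) = 2 S(y)`, with a gap that is a positive combination of squares.
Minimality of `y` forces every square to vanish, i.e. `y ∘ σ / y` is constant along edges, hence
constant by strong connectivity. Finally `y ∘ σ = c • y` with `Σ y ∘ σ = Σ y > 0` gives `c = 1`.
-/

open Finset Function Relation

theorem Relation.TransGen.apply_eq_apply {α β : Type*} {r : α → α → Prop} {f : α → β}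
    (h : ∀ a b, r a b → f a = f b) {a b : α} (hab : TransGen r a b) : f a = f b := by
  induction hab with
  | single hr => exact h _ _ hr
  | tail _ hr ih => exact ih.trans (h _ _ hr)

theorem eq_one_of_apply_comp_eq_mul {V : Type*} [Fintype V] [Nonempty V] {σ : V → V}
    (hσ : Bijective σ) {y : V → ℝ} (hy : ∀ v, 0 < y v) {c : ℝ} (h : ∀ v, y (σ v) = c * y v) :
    c = 1 := by
  have hpos : 0 < ∑ v, y v := sum_pos (fun v _ => hy v) univ_nonempty
  have hsum : c * ∑ v, y v = ∑ v, y v := by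
    rw [mul_sum, ← hσ.sum_comp y]
    exact Fintype.sum_congr _ _ fun v => (h v).symm
  exact (mul_eq_right₀ hpos.ne').1 hsum

theorem Real.sqrt_mul_div_sqrt_mul {a b c d : ℝ} (ha : 0 ≤ a) (hc : 0 ≤ c) (hd : 0 ≤ d) :
    √(a * b) / √(c * d) = √(a / c) * √(b / d) := by
  rw [Real.sqrt_mul ha, Real.sqrt_mul hc, Real.sqrt_div' _ hc, Real.sqrt_div' _ hd,
    mul_div_mul_comm]

namespace MonomialQuotient

variable {V : Type*} [Fintype V] (E : V → V → Prop) [DecidableRel E] (w : V → V → ℝ)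

/-- The monomial-quotient graphic sum `S_Γ^÷(w|y)`. -/
noncomputable def graphicSum (y : V → ℝ) : ℝ :=
  ∑ u, ∑ v, if E u v then w u v * (y u / y v) else 0

variable {E w}

theorem graphicSum_comp_of_isAutomorphism {σ : V → V} (hσ : Bijective σ)
    (hE : ∀ u v, E u v ↔ E (σ u) (σ v)) (hwσ : ∀ u v, E u v → w (σ u) (σ v) = w u v)
    (y : V → ℝ) : graphicSum E w (y ∘ σ) = graphicSum E w y := by
  symm
  unfold graphicSum
  rw [← hσ.sum_comp]
  refine Fintype.sum_congr _ _ fun u => ?_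
  rw [← hσ.sum_comp]
  refine Fintype.sum_congr _ _ fun v => ?_
  simp only [comp_apply, ← hE]
  split_ifs with huv
  · rw [hwσ u v huv]
  · rfl

variable {y y' : V → ℝ}

theorem graphicSum_add_sub_graphicSum_sqrt_mul (hy : ∀ v, 0 < y v) (hy' : ∀ v, 0 < y' v) :
    graphicSum E w y + graphicSum E w y' - 2 * graphicSum E w (fun v => √(y v * y' v)) =
      ∑ u, ∑ v, if E u v then w u v * (√(y u / y v) - √(y' u / y' v)) ^ 2 else 0 := by
  simp only [graphicSum, ← sum_add_distrib, mul_sum, ← sum_sub_distrib]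
  refine Fintype.sum_congr _ _ fun u => Fintype.sum_congr _ _ fun v => ?_
  split_ifs
  · rw [Real.sqrt_mul_div_sqrt_mul (hy u).le (hy v).le (hy' v).le]
    have ha := Real.sq_sqrt (div_pos (hy u) (hy v)).le
    have hb := Real.sq_sqrt (div_pos (hy' u) (hy' v)).le
    linear_combination (-w u v) * ha + (-w u v) * hb
  · simp

theorem div_eq_div_of_graphicSum_le_graphicSum_sqrt_mul (hw : ∀ u v, E u v → 0 < w u v)
    (hy : ∀ v, 0 < y v) (hy' : ∀ v, 0 < y' v)
    (h : graphicSum E w y + graphicSum E w y' ≤ 2 * graphicSum E w (fun v => √(y v * y' v)))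
    {u v : V} (huv : E u v) : y u / y v = y' u / y' v := by
  set gap : V → V → ℝ := fun u v =>
    if E u v then w u v * (√(y u / y v) - √(y' u / y' v)) ^ 2 else 0
  have hgap : 0 ≤ gap := fun u v => by
    dsimp only [gap]
    split_ifs with hE
    · exact mul_nonneg (hw u v hE).le (sq_nonneg _)
    · exact le_rfl
  have hrow : 0 ≤ fun u => ∑ v, gap u v := fun u => sum_nonneg fun v _ => hgap u v
  have hsum : ∑ u, ∑ v, gap u v = 0 :=
    le_antisymm (by linarith [graphicSum_add_sub_graphicSum_sqrt_mul (E := E) (w := w) hy hy'])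
      (sum_nonneg fun u _ => hrow u)
  have hzero : gap u v = 0 := by
    have := congrFun ((Fintype.sum_eq_zero_iff_of_nonneg hrow).1 hsum) u
    exact congrFun ((Fintype.sum_eq_zero_iff_of_nonneg (hgap u)).1 this) v
  simp only [gap, if_pos huv, mul_eq_zero, (hw u v huv).ne', false_or, pow_eq_zero_iff two_ne_zero,
    sub_eq_zero] at hzero
  exact (Real.sqrt_inj (div_pos (hy u) (hy v)).le (div_pos (hy' u) (hy' v)).le).1 hzero

end MonomialQuotient

open MonomialQuotient

theorem monomial_quotient_sum_symmetric_minimizer_general {V : Type*} [Fintype V]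
    (E : V → V → Prop) [DecidableRel E]
    (hsc : ∀ u v : V, Relation.TransGen E u v)
    (w : V → V → ℝ) (hw : ∀ u v, E u v → 0 < w u v)
    (σ : V → V) (hσ : Function.Bijective σ)
    (hE : ∀ u v : V, E u v ↔ E (σ u) (σ v))
    (hwσ : ∀ u v : V, E u v → w (σ u) (σ v) = w u v)
    (S : (V → ℝ) → ℝ)
    (hS : ∀ y : V → ℝ,
      S y = ∑ u : V, ∑ v : V, if E u v then w u v * (y u / y v) else 0)
    (y : V → ℝ) (hy : ∀ v, 0 < y v)
    (hmin : ∀ z : V → ℝ, (∀ v, 0 < z v) → S y ≤ S z) :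
    ∀ v : V, y (σ v) = y v := by
  obtain rfl : S = graphicSum E w := funext hS
  have hyσ : ∀ v, 0 < y (σ v) := fun v => hy (σ v)
  have hmean : graphicSum E w y + graphicSum E w (y ∘ σ) ≤
      2 * graphicSum E w (fun v => √(y v * y (σ v))) := by
    rw [graphicSum_comp_of_isAutomorphism hσ hE hwσ]
    linarith [hmin _ fun v => Real.sqrt_pos.2 (mul_pos (hy v) (hyσ v))]
  have hratio : ∀ u v, y (σ u) / y u = y (σ v) / y v := fun u v =>
    (hsc u v).apply_eq_apply fun a b hab => by
      rw [div_eq_div_iff_div_eq_div' (hy a).ne' (hyσ b).ne']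
      exact (div_eq_div_of_graphicSum_le_graphicSum_sqrt_mul hw hy hyσ hmean hab).symm
  intro v
  have : Nonempty V := ⟨v⟩
  have hc := eq_one_of_apply_comp_eq_mul hσ hy fun u => (div_eq_iff (hy u).ne').1 (hratio u v)
  exact (div_eq_one_iff_eq (hy v).ne').1 hc

theorem monomial_quotient_sum_symmetric_minimizer {V : Type*} [Fintype V] [Nonempty V]
    (E : V → V → Prop) [DecidableRel E]
    (hsc : ∀ u v : V, Relation.TransGen E u v)
    (w : V → V → ℝ) (hw : ∀ u v, E u v → 0 < w u v)
    (σ : V → V) (hσ : Function.Bijective σ)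
    (hE : ∀ u v : V, E u v ↔ E (σ u) (σ v))
    (hwσ : ∀ u v : V, E u v → w (σ u) (σ v) = w u v)
    (S : (V → ℝ) → ℝ)
    (hS : ∀ y : V → ℝ,
      S y = ∑ u : V, ∑ v : V, if E u v then w u v * (y u / y v) else 0)
    (y : V → ℝ) (hy : ∀ v, 0 < y v)
    (hmin : ∀ z : V → ℝ, (∀ v, 0 < z v) → S y ≤ S z) :
    ∀ v : V, y (σ v) = y v :=
  monomial_quotient_sum_symmetric_minimizer_general E hsc w hw σ hσ hE hwσ S hS y hy hmin
end

section
/- For all positive reals a, b, c and every positive real x, the inequality a/(b + c·x) + b/(c + a·x) + c/(a + b·x) ≥ 3x/(1 + x³) holds (the Mavlo–Georgiev inequality). -/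
/-!
Writing each term as `a² / (a (b + c x))`, Sedrakyan's (Engel's) form of Cauchy–Schwarz bounds the
cyclic sum below by `(a + b + c)² / ((1 + x)(ab + bc + ca)) ≥ 3 / (1 + x)`. It remains to compare
`3 / (1 + x)` with `3x / (1 + x³)`, which amounts to `1 + x³ - x(1 + x) = (1 + x)(1 - x)² ≥ 0`.
-/

lemma sq_add_add_div_le_add_add {a b c u v w : ℝ} (hu : 0 < u) (hv : 0 < v) (hw : 0 < w) :
    (a + b + c) ^ 2 / (u + v + w) ≤ a ^ 2 / u + b ^ 2 / v + c ^ 2 / w := by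
  simpa [Fin.sum_univ_three, add_assoc] using
    Finset.sq_sum_div_le_sum_sq_div Finset.univ ![a, b, c] (g := ![u, v, w])
      (by simp [Fin.forall_fin_succ, hu, hv, hw])

lemma three_div_one_add_le_cyclic_sum {a b c x : ℝ} (ha : 0 < a) (hb : 0 < b) (hc : 0 < c)
    (hx : 0 ≤ x) :
    3 / (1 + x) ≤ a / (b + c * x) + b / (c + a * x) + c / (a + b * x) := by
  have engel (p q r : ℝ) (hp : 0 < p) (hq : 0 < q) (hr : 0 < r) : p / (q + r * x) =
      p ^ 2 / (p * (q + r * x)) := by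
    field_simp
  rw [engel a b c ha hb hc, engel b c a hb hc ha, engel c a b hc ha hb]
  refine le_trans ?_ (sq_add_add_div_le_add_add (by positivity) (by positivity) (by positivity))
  have hden : a * (b + c * x) + b * (c + a * x) + c * (a + b * x) =
      (1 + x) * (a * b + b * c + c * a) := by ring
  rw [hden, div_le_div_iff₀ (by positivity) (by positivity)]
  nlinarith [sq_nonneg (a - b), sq_nonneg (b - c), sq_nonneg (a - c)]

lemma div_one_add_pow_three_le_one_div_one_add {x : ℝ} (hx : 0 ≤ x) :
    x / (1 + x ^ 3) ≤ 1 / (1 + x) := by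
  rw [div_le_div_iff₀ (by positivity) (by positivity)]
  nlinarith [mul_nonneg (sq_nonneg (1 - x)) (by positivity : (0 : ℝ) ≤ 1 + x)]

theorem mavlo_georgiev (a b c x : ℝ) (ha : 0 < a) (hb : 0 < b) (hc : 0 < c) (hx : 0 < x) :
    a / (b + c * x) + b / (c + a * x) + c / (a + b * x) ≥ 3 * x / (1 + x ^ 3) :=
  calc 3 * x / (1 + x ^ 3) = 3 * (x / (1 + x ^ 3)) := mul_div_assoc _ _ _
    _ ≤ 3 * (1 / (1 + x)) :=
      mul_le_mul_of_nonneg_left (div_one_add_pow_three_le_one_div_one_add hx.le) zero_le_three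
    _ = 3 / (1 + x) := mul_one_div _ _
    _ ≤ _ := three_div_one_add_le_cyclic_sum ha hb hc hx.le
end

section
/- For all positive reals a, b, c and every positive real x, the inequality a/(b + c·x) + b/(c + a·x) + c/(a + b·x) ≥ 3/(1 + x) holds. (This is a sharp strengthening of the Mavlo–Georgiev bound 3x/(1+x³), since (1+x³)/x − (x+1) = (x−1)²(x+1) ≥ 0.) -/
theorem mavlo_georgiev_sharp (a b c x : ℝ) (ha : 0 < a) (hb : 0 < b) (hc : 0 < c)
    (hx : 0 < x) :
    a / (b + c * x) + b / (c + a * x) + c / (a + b * x) ≥ 3 / (1 + x) := by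
  have h1 : 0 < b + c * x := by positivity
  have h2 : 0 < c + a * x := by positivity
  have h3 : 0 < a + b * x := by positivity
  have h4 : 0 < 1 + x := by positivity
  set q : ℝ := a*b + b*c + c*a with hq
  have hq0 : 0 < q := by positivity
  set s : ℝ := (1 + x) * q / (a + b + c) with hs
  have hs0 : 0 < s := by positivity
  have tang : ∀ u d : ℝ, 0 < u → 0 < d → u / d ≥ 2*u/s - u*d/s^2 := by
    intro u d hu hd
    have key : u / d - (2*u/s - u*d/s^2) = u*(s-d)^2/(d*s^2) := by
      field_simp
      ring
    nlinarith [div_nonneg (mul_nonneg hu.le (sq_nonneg (s-d))) (by positivity : (0:ℝ) ≤ d*s^2)]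
  have t1 := tang a (b + c*x) ha h1
  have t2 := tang b (c + a*x) hb h2
  have t3 := tang c (a + b*x) hc h3
  have heq : 2*a/s - a*(b+c*x)/s^2 + (2*b/s - b*(c+a*x)/s^2) + (2*c/s - c*(a+b*x)/s^2)
      = (a+b+c)^2 / ((1+x)*q) := by
    rw [hs, hq]
    have habc : (0:ℝ) < a + b + c := by positivity
    field_simp
    ring
  have hfin : (a+b+c)^2 / ((1+x)*q) ≥ 3 / (1+x) := by
    rw [ge_iff_le, div_le_div_iff₀ h4 (by positivity)]
    nlinarith [sq_nonneg (a-b), sq_nonneg (b-c), sq_nonneg (c-a), h4.le, mul_pos h4 hx]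
  linarith [heq ▸ hfin]
end

section
/- For all positive reals u, v, w, the inequality 1/(u(1 + v)) + 1/(v(1 + w)) + 1/(w(1 + u)) ≥ 3 / ( (uvw)^{1/3} · (1 + (uvw)^{1/3}) ) holds. -/
/-!
With `t = (uvw)^{1/3}` write `u = t x / y`, `v = t y / z`, `w = t z / x`. Then
`1 / (u (1 + v)) = (yz)² / (t xyz (z + t y))`, and the three denominators add up to
`t (1 + t) xyz (x + y + z)`. Sedrakyan's lemma bounds the sum below by
`(xy + yz + zx)² / (t (1 + t) xyz (x + y + z))`, which is at least `3 / (t (1 + t))` since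
`(a + b + c)² ≥ 3 (ab + bc + ca)` for `a = xy`, `b = yz`, `c = zx`.
-/

theorem sq_add_add_div_le_add_add_sq_div {a b c p q r : ℝ} (hp : 0 < p) (hq : 0 < q) (hr : 0 < r) :
    (a + b + c) ^ 2 / (p + q + r) ≤ a ^ 2 / p + b ^ 2 / q + c ^ 2 / r := by
  simpa [Fin.sum_univ_three] using
    Finset.sq_sum_div_le_sum_sq_div Finset.univ ![a, b, c] (g := ![p, q, r])
      (by simp [Fin.forall_fin_succ, hp, hq, hr])

theorem three_mul_mul_mul_add_le_sq (x y z : ℝ) :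
    3 * (x * y * z * (x + y + z)) ≤ (y * z + z * x + x * y) ^ 2 := by
  nlinarith [sq_nonneg (x * y - y * z), sq_nonneg (y * z - z * x), sq_nonneg (z * x - x * y)]

theorem one_div_mul_one_add_eq {t x y z : ℝ} (hz : z ≠ 0) :
    1 / (t * x / y * (1 + t * y / z)) = (y * z) ^ 2 / (t * (x * y * z * (z + t * y))) := by
  field_simp

theorem three_div_le_cyclic_sum {t x y z : ℝ} (ht : 0 < t) (hx : 0 < x) (hy : 0 < y) (hz : 0 < z) :
    3 / (t * (1 + t)) ≤ 1 / (t * x / y * (1 + t * y / z)) + 1 / (t * y / z * (1 + t * z / x)) +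
      1 / (t * z / x * (1 + t * x / y)) := by
  rw [one_div_mul_one_add_eq hz.ne', one_div_mul_one_add_eq hx.ne',
    one_div_mul_one_add_eq hy.ne']
  have hs : 0 < x * y * z * (x + y + z) := by positivity
  calc 3 / (t * (1 + t))
      = 3 * (x * y * z * (x + y + z)) / (t * (1 + t) * (x * y * z * (x + y + z))) :=
        (mul_div_mul_right _ _ hs.ne').symm
    _ ≤ (y * z + z * x + x * y) ^ 2 / (t * (1 + t) * (x * y * z * (x + y + z))) := by
        gcongr
        exact three_mul_mul_mul_add_le_sq x y z
    _ = (y * z + z * x + x * y) ^ 2 / (t * (x * y * z * (z + t * y)) +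
          t * (y * z * x * (x + t * z)) + t * (z * x * y * (y + t * x))) := by
        congr 1; ring
    _ ≤ _ := sq_add_add_div_le_add_add_sq_div (by positivity) (by positivity) (by positivity)

theorem exists_eq_mul_div_cyclic {t u v w : ℝ} (ht : 0 < t) (hu : 0 < u) (hv : 0 < v)
    (h : t ^ 3 = u * v * w) :
    ∃ x y z : ℝ, 0 < x ∧ 0 < y ∧ 0 < z ∧ u = t * x / y ∧ v = t * y / z ∧ w = t * z / x := by
  refine ⟨1, t / u, t ^ 2 / (u * v), one_pos, by positivity, by positivity, ?_, ?_, ?_⟩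
  · field_simp
  · field_simp
  · field_simp
    linear_combination -h

theorem three_div_le_of_pow_three_eq {t u v w : ℝ} (ht : 0 < t) (hu : 0 < u) (hv : 0 < v)
    (h : t ^ 3 = u * v * w) :
    3 / (t * (1 + t)) ≤ 1 / (u * (1 + v)) + 1 / (v * (1 + w)) + 1 / (w * (1 + u)) := by
  obtain ⟨x, y, z, hx, hy, hz, rfl, rfl, rfl⟩ := exists_eq_mul_div_cyclic ht hu hv h
  exact three_div_le_cyclic_sum ht hx hy hz

theorem mavlo_georgiev_sharp_uvw (u v w : ℝ) (hu : 0 < u) (hv : 0 < v) (hw : 0 < w) :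
    1 / (u * (1 + v)) + 1 / (v * (1 + w)) + 1 / (w * (1 + u)) ≥
      3 / ((u * v * w) ^ ((1 : ℝ) / 3) * (1 + (u * v * w) ^ ((1 : ℝ) / 3))) := by
  have huvw : 0 < u * v * w := by positivity
  refine three_div_le_of_pow_three_eq (Real.rpow_pos_of_pos huvw _) hu hv ?_
  rw [one_div, ← Real.rpow_natCast, ← Real.rpow_mul huvw.le]
  norm_num
end

section
/- For all nonnegative reals a, b, c, the inequality a + b/(a + 1) + c/(b + 1) + (25/2)/(c + 1) ≥ 11/2 holds. -/
theorem modified_amgm_inequality (a b c : ℝ) (ha : 0 ≤ a) (hb : 0 ≤ b) (hc : 0 ≤ c) :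
    a + b / (a + 1) + c / (b + 1) + (25 / 2) / (c + 1) ≥ 11 / 2 := by
  have h1 : (0:ℝ) < a + 1 := by linarith
  have h2 : (0:ℝ) < b + 1 := by linarith
  have h3 : (0:ℝ) < c + 1 := by linarith
  rcases le_or_gt b (1/4) with hb4 | hb4
  · -- easy case b ≤ 1/4 : drop first two terms, c/(b+1) ≥ 4c/5
    have t1 : 0 ≤ b / (a+1) := by positivity
    have t2 : 4*c/5 ≤ c / (b + 1) := by
      rw [div_le_div_iff₀ (by norm_num) h2]
      nlinarith
    have t3 : 4*c/5 + (25/2)/(c+1) ≥ 11/2 := by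
      rw [ge_iff_le, ← sub_nonneg]
      have h : 4*c/5 + (25/2)/(c+1) - 11/2 = (8*c^2 - 47*c + 70) / (10*(c+1)) := by
        field_simp; ring
      rw [h]
      apply div_nonneg _ (by positivity)
      nlinarith [sq_nonneg (16*c - 47)]
    linarith
  · -- main case: s = √b ≥ 1/2
    set s := Real.sqrt b with hs
    have hs0 : 0 ≤ s := Real.sqrt_nonneg b
    have hs2 : s^2 = b := Real.sq_sqrt hb
    have hshalf : 1/2 ≤ s := by
      have h : Real.sqrt (1/4) ≤ s := Real.sqrt_le_sqrt (by linarith)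
      rwa [show (1/4 : ℝ) = (1/2)^2 by norm_num, Real.sqrt_sq (by norm_num)] at h
    -- AM-GM: a + b/(a+1) ≥ 2s - 1
    have amgm : 2*s - 1 ≤ a + b / (a+1) := by
      have key : (2*s - 1 - a) * (a+1) ≤ b := by nlinarith [sq_nonneg (a + 1 - s)]
      have : 2*s - 1 - a ≤ b / (a+1) := by
        rw [le_div_iff₀ h1]; exact key
      linarith
    -- key 2-variable inequality
    have key2 : 2*s - 1 + c / (s^2+1) + (25/2)/(c+1) ≥ 11/2 := by
      have hd : (0:ℝ) < s^2 + 1 := by positivity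
      rw [ge_iff_le, ← sub_nonneg]
      have expand : 2*s - 1 + c / (s^2+1) + (25/2)/(c+1) - 11/2 =
          (4*s^3*c - 13*s^2*c + 4*s*c - 11*c + 2*c^2 + 4*s^3 + 12*s^2 + 4*s + 12)
            / (2*(s^2+1)*(c+1)) := by
        field_simp; ring
      rw [expand]
      apply div_nonneg _ (by positivity)
      nlinarith [sq_nonneg (2*c - 5*s - 3), mul_nonneg (by linarith : (0:ℝ) ≤ 2*s-1) (sq_nonneg (s-1)),
        mul_nonneg (mul_nonneg (by linarith : (0:ℝ) ≤ 2*s-1) hc) (sq_nonneg (s-1)),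
        sq_nonneg (s-1), mul_nonneg hc (sq_nonneg (s-1)), sq_nonneg (c-4),
        mul_nonneg hc (sq_nonneg (2*c - 5*s - 3))]
    have hcb : c / (b+1) = c / (s^2+1) := by rw [hs2]
    linarith
end

section
/- Define f(x) = inf over positive integers n of n · x^{1/n} for real x > 1, and let ‖y‖ denote the distance from the real number y to the nearest integer. Then there exist constants C > 0 and x₀ > 1 such that for all x ≥ x₀, | f(x) − e·ln x − e·‖ln x‖² / (2 ln x) | ≤ C / (ln x)². -/
/-!
Write `t = log x`, so that `n * x ^ (1 / n) = e * n * exp ((t - n) / n)`. Taylor expansion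
of `exp` to third order gives
`n * x ^ (1 / n) = e * t + e * (t - n) ^ 2 / (2 * t) + O(|t - n| ^ 3 / t ^ 2)`
for `n` near `t`, and the one-sided bound `exp u ≥ 1 + u + u ^ 2 / 2 + u ^ 3 / 6`, valid for
all real `u`, controls every other `n`. Since `round t` minimises `|t - n|` over the integers,
the infimum is `e * t + e * ‖t‖ ^ 2 / (2 * t) + O(1 / t ^ 2)`.
-/

open Real Set

lemma exp_le_quadratic_taylor_of_nonpos {u : ℝ} (hu : u ≤ 0) : exp u ≤ 1 + u + u ^ 2 / 2 := by
  have hanti : Antitone fun v : ℝ ↦ 1 + v + v ^ 2 / 2 - exp v := by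
    refine antitone_of_hasDerivAt_nonpos (f' := fun v ↦ 1 + v - exp v) (fun v ↦ ?_)
      fun v ↦ show 1 + v - exp v ≤ 0 by linarith [add_one_le_exp v]
    exact ((((hasDerivAt_id v).const_add 1).add ((hasDerivAt_pow 2 v).div_const 2)).sub
      (hasDerivAt_exp v)).congr_deriv (by ring)
  simpa using hanti hu

lemma cubic_taylor_le_exp (u : ℝ) : 1 + u + u ^ 2 / 2 + u ^ 3 / 6 ≤ exp u := by
  rcases le_total 0 u with hu | hu
  · simpa [Finset.sum_range_succ, Nat.factorial] using sum_le_exp_of_nonneg hu 4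
  have hanti : AntitoneOn (fun v : ℝ ↦ exp v - (1 + v + v ^ 2 / 2 + v ^ 3 / 6)) (Iic 0) := by
    refine antitoneOn_of_hasDerivWithinAt_nonpos (convex_Iic 0) (by fun_prop)
      (f' := fun v ↦ exp v - (1 + v + v ^ 2 / 2)) (fun v _ ↦ ?_) fun v hv ↦ ?_
    · exact ((hasDerivAt_exp v).sub ((((hasDerivAt_id v).const_add 1).add
        ((hasDerivAt_pow 2 v).div_const 2)).add ((hasDerivAt_pow 3 v).div_const 6))).congr_deriv
        (by ring) |>.hasDerivWithinAt
    · rw [interior_Iic] at hv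
      linarith [exp_le_quadratic_taylor_of_nonpos hv.le]
  simpa using hanti hu self_mem_Iic hu

lemma exp_le_quadratic_taylor_add_abs_cube {u : ℝ} (hu : |u| ≤ 1) :
    exp u ≤ 1 + u + u ^ 2 / 2 + |u| ^ 3 := by
  have h := abs_le.1 (Real.exp_bound hu (n := 3) (by norm_num))
  norm_num [Finset.sum_range_succ, Nat.factorial] at h
  nlinarith [pow_nonneg (abs_nonneg u) 3]

lemma mul_exp_div_eq {t s : ℝ} (hs : s ≠ 0) :
    s * exp (t / s) = exp 1 * (s * exp ((t - s) / s)) := by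
  rw [mul_left_comm, ← exp_add]
  congr 3
  field_simp
  ring

lemma exp_one_mul_cubic_le_mul_exp_div {t n : ℝ} (hn : 0 < n) :
    exp 1 * (t + (t - n) ^ 2 * (2 * n + t) / (6 * n ^ 2)) ≤ n * exp (t / n) := by
  rw [mul_exp_div_eq hn.ne']
  gcongr
  calc t + (t - n) ^ 2 * (2 * n + t) / (6 * n ^ 2)
      = n * (1 + (t - n) / n + ((t - n) / n) ^ 2 / 2 + ((t - n) / n) ^ 3 / 6) := by
        field_simp
        ring
    _ ≤ n * exp ((t - n) / n) := by gcongr; exact cubic_taylor_le_exp _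

lemma mul_exp_div_le {t m : ℝ} (hm : 0 < m) (htm : |t - m| ≤ m) :
    m * exp (t / m) ≤ exp 1 * (t + (t - m) ^ 2 / (2 * m) + |t - m| ^ 3 / m ^ 2) := by
  have hu : |(t - m) / m| ≤ 1 := by rwa [abs_div, abs_of_pos hm, div_le_one hm]
  rw [mul_exp_div_eq hm.ne']
  gcongr
  calc m * exp ((t - m) / m)
      ≤ m * (1 + (t - m) / m + ((t - m) / m) ^ 2 / 2 + |(t - m) / m| ^ 3) := by
        gcongr; exact exp_le_quadratic_taylor_add_abs_cube hu
    _ = t + (t - m) ^ 2 / (2 * m) + |t - m| ^ 3 / m ^ 2 := by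
        rw [abs_div, abs_of_pos hm]
        field_simp
        ring

lemma sq_div_sub_le_cubic_excess {t n δ : ℝ} (ht : 1 ≤ t) (hn : 0 < n) (hδ : |δ| ≤ 1 / 2)
    (hδn : |δ| ≤ |t - n|) :
    δ ^ 2 / (2 * t) - 2 / (3 * t ^ 2) ≤ (t - n) ^ 2 * (2 * n + t) / (6 * n ^ 2) := by
  have hδ2 : δ ^ 2 ≤ 1 / 4 := by nlinarith [sq_abs δ, abs_nonneg δ]
  have hδn2 : δ ^ 2 ≤ (t - n) ^ 2 := sq_le_sq.2 hδn
  have key : (3 * δ ^ 2 * t - 4) * n ^ 2 ≤ (t - n) ^ 2 * (2 * n + t) * t ^ 2 := by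
    obtain ⟨a, rfl⟩ : ∃ a, n = t + a := ⟨n - t, by ring⟩
    have ha2 : (t - (t + a)) ^ 2 = a ^ 2 := by ring
    rw [ha2] at hδn2 ⊢
    -- Within distance 1 of `t` the negative cubic term costs `O(1 / t ^ 2)`; farther away
    -- `(t - n) ^ 2 ≥ 4 * δ ^ 2` leaves enough room to absorb it.
    rcases le_total a 0 with ha | ha
    · nlinarith [mul_le_mul_of_nonneg_left hδn2 (by positivity : 0 ≤ 3 * t * (t + a) ^ 2),
        mul_nonneg (mul_nonneg (sq_nonneg a) (neg_nonneg.2 ha))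
          (by positivity : 0 ≤ t * (t + a) * 3)]
    rcases le_total a 1 with ha1 | ha1
    · nlinarith [mul_le_mul_of_nonneg_left hδn2 (by positivity : 0 ≤ 3 * t * (t + a) ^ 2),
        mul_le_mul_of_nonneg_right (pow_le_one₀ ha ha1 : a ^ 3 ≤ 1)
          (by positivity : 0 ≤ t * (4 * t + 3 * a))]
    have hδa : 4 * δ ^ 2 ≤ a ^ 2 := by nlinarith
    rcases le_total a (2 * t) with hat | hta
    · have hq : 0 ≤ 9 * t ^ 2 + 2 * a * t - 3 * a ^ 2 := by nlinarith
      nlinarith [mul_le_mul_of_nonneg_left hδa (by positivity : 0 ≤ 3 * t * (t + a) ^ 2),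
        mul_nonneg (by positivity : 0 ≤ a ^ 2 * t) hq]
    · have hsq : (t + a) ^ 2 ≤ 9 / 4 * a ^ 2 := by nlinarith
      have hcube : 27 / 16 * t * a ^ 2 ≤ a ^ 2 * (2 * (t + a) + t) * t ^ 2 := by
        nlinarith [mul_nonneg (by positivity : 0 ≤ a ^ 2 * t)
          (by nlinarith : 0 ≤ (3 * t + 2 * a) * t - 27 / 16)]
      nlinarith [mul_le_mul_of_nonneg_left hδ2 (by positivity : 0 ≤ 3 * t * (t + a) ^ 2),
        mul_le_mul_of_nonneg_left hsq (by positivity : 0 ≤ 3 / 4 * t)]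
  rw [div_sub_div _ _ (by positivity) (by positivity),
    div_le_div_iff₀ (by positivity) (by positivity)]
  nlinarith [key]

lemma cubic_excess_le_sq_div {t m : ℝ} (ht : 2 ≤ t) (htm : |t - m| ≤ 1 / 2) :
    (t - m) ^ 2 / (2 * m) + |t - m| ^ 3 / m ^ 2 ≤ (t - m) ^ 2 / (2 * t) + 1 / (3 * t ^ 2) := by
  have hm : 3 * t ≤ 4 * m := by linarith [(abs_le.1 htm).2]
  have hm0 : 0 < m := by linarith
  have hcube : |t - m| ^ 3 ≤ 1 / 8 := by
    calc |t - m| ^ 3 ≤ (1 / 2) ^ 3 := pow_le_pow_left₀ (abs_nonneg _) htm 3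
      _ = 1 / 8 := by norm_num
  have hcube' : (t - m) ^ 3 ≤ 1 / 8 := ((le_abs_self _).trans (abs_pow _ 3).le).trans hcube
  have key : 3 * (t - m) ^ 3 * m * t + 6 * |t - m| ^ 3 * t ^ 2 ≤ 2 * m ^ 2 := by
    nlinarith [mul_le_mul_of_nonneg_left hcube' (by positivity : 0 ≤ 3 * m * t),
      mul_le_mul_of_nonneg_left hcube (by positivity : 0 ≤ 6 * t ^ 2)]
  rw [div_add_div _ _ (by positivity) (by positivity),
    div_add_div _ _ (by positivity) (by positivity),
    div_le_div_iff₀ (by positivity) (by positivity)]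
  nlinarith [mul_le_mul_of_nonneg_left key (by positivity : 0 ≤ 2 * m * t)]

lemma exp_one_mul_add_sub_le_mul_exp_div {t n δ : ℝ} (ht : 1 ≤ t) (hn : 0 < n)
    (hδ : |δ| ≤ 1 / 2) (hδn : |δ| ≤ |t - n|) :
    exp 1 * t + exp 1 * δ ^ 2 / (2 * t) - 2 / t ^ 2 ≤ n * exp (t / n) := by
  have he : exp 1 * (2 / (3 * t ^ 2)) ≤ 2 / t ^ 2 := by
    calc exp 1 * (2 / (3 * t ^ 2)) ≤ 3 * (2 / (3 * t ^ 2)) := by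
          gcongr; exact exp_one_lt_three.le
      _ = 2 / t ^ 2 := by field_simp
  calc exp 1 * t + exp 1 * δ ^ 2 / (2 * t) - 2 / t ^ 2
      ≤ exp 1 * (t + (δ ^ 2 / (2 * t) - 2 / (3 * t ^ 2))) := by
        rw [mul_add, mul_sub, mul_div_assoc]; linarith
    _ ≤ exp 1 * (t + (t - n) ^ 2 * (2 * n + t) / (6 * n ^ 2)) := by
        gcongr; exact sq_div_sub_le_cubic_excess ht hn hδ hδn
    _ ≤ n * exp (t / n) := exp_one_mul_cubic_le_mul_exp_div hn

lemma mul_exp_div_le_exp_one_mul_add_add {t m : ℝ} (ht : 2 ≤ t) (htm : |t - m| ≤ 1 / 2) :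
    m * exp (t / m) ≤ exp 1 * t + exp 1 * (t - m) ^ 2 / (2 * t) + 2 / t ^ 2 := by
  have hm : 3 / 2 ≤ m := by linarith [(abs_le.1 htm).2]
  have he : exp 1 * (1 / (3 * t ^ 2)) ≤ 2 / t ^ 2 := by
    calc exp 1 * (1 / (3 * t ^ 2)) ≤ 3 * (1 / (3 * t ^ 2)) := by
          gcongr; exact exp_one_lt_three.le
      _ ≤ 2 / t ^ 2 := by field_simp; norm_num
  calc m * exp (t / m) ≤ exp 1 * (t + (t - m) ^ 2 / (2 * m) + |t - m| ^ 3 / m ^ 2) :=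
        mul_exp_div_le (by linarith) (htm.trans (by linarith))
    _ ≤ exp 1 * (t + ((t - m) ^ 2 / (2 * t) + 1 / (3 * t ^ 2))) := by
        rw [add_assoc]; gcongr exp 1 * (t + ?_); exact cubic_excess_le_sq_div ht htm
    _ ≤ exp 1 * t + exp 1 * (t - m) ^ 2 / (2 * t) + 2 / t ^ 2 := by
        rw [mul_add, mul_add, mul_div_assoc]; linarith

lemma abs_csInf_sub_le {S : Set ℝ} {a ε : ℝ} (hlow : ∀ y ∈ S, a - ε ≤ y)
    (hup : ∃ y ∈ S, y ≤ a + ε) : |sInf S - a| ≤ ε := by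
  obtain ⟨y, hyS, hy⟩ := hup
  rw [abs_sub_le_iff]
  constructor
  · linarith [csInf_le ⟨a - ε, hlow⟩ hyS]
  · linarith [le_csInf ⟨y, hyS⟩ hlow]

theorem amgm_envelope_asymptotics (f : ℝ → ℝ)
    (hf : ∀ x : ℝ, 1 < x →
      f x = sInf { y : ℝ | ∃ n : ℕ, 1 ≤ n ∧ y = (n : ℝ) * x ^ ((1 : ℝ) / n) }) :
    ∃ C > 0, ∃ x₀ > 1, ∀ x ≥ x₀,
      |f x - Real.exp 1 * Real.log x -
          Real.exp 1 * |Real.log x - (round (Real.log x) : ℝ)| ^ 2 / (2 * Real.log x)| ≤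
        C / (Real.log x) ^ 2 := by
  refine ⟨2, two_pos, exp 2, one_lt_exp_iff.2 two_pos, fun x hx ↦ ?_⟩
  have hx0 : 0 < x := (exp_pos 2).trans_le hx
  set t := log x
  have ht : 2 ≤ t := (le_log_iff_exp_le hx0).2 hx
  have hpow (n : ℕ) : (n : ℝ) * x ^ ((1 : ℝ) / n) = n * exp (t / n) := by
    rw [rpow_def_of_pos hx0, mul_one_div]
  rw [sub_sub, hf x (one_lt_exp_iff.2 two_pos |>.trans_le hx), sq_abs]
  apply abs_csInf_sub_le
  · rintro y ⟨n, hn, rfl⟩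
    rw [hpow]
    exact exp_one_mul_add_sub_le_mul_exp_div (by linarith) (by exact_mod_cast hn)
      (abs_sub_round t) (round_le t n)
  · have hround : 0 < round t :=
      Int.cast_pos.1 (show (0 : ℝ) < round t by linarith [(abs_le.1 (abs_sub_round t)).2])
    refine ⟨_, ⟨(round t).toNat, by omega, rfl⟩, ?_⟩
    have hcast : ((round t).toNat : ℝ) = round t := by
      exact_mod_cast Int.toNat_of_nonneg hround.le
    rw [hpow, hcast]
    exact mul_exp_div_le_exp_one_mul_add_add ht (abs_sub_round t)
end

section
/- For each positive integer n and positive vector x = (x₁, …, x_n), let g_n(x) = Σ_{j=1}^n ( x_j + 1/x_j ) + Σ_{j=1}^{n−1} x_j/x_{j+1}, and let m_n = inf over positive vectors x of g_n(x). Then there exists a constant C > 0 such that m_n = 3n − C + o(1) as n → ∞; that is, the sequence (3n − m_n) converges to C. (Numerically C ≈ 1.3694514; this resolves Shallit's minimization problem.) -/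
/-!
Write `f n = 3 n - m n`. Regrouping `g_n(x) = x₁ + 1/x_n + ∑ (x_{j+1} + 1/x_j + x_j/x_{j+1})`
and applying AM–GM to each triple (whose product is `1`) gives `g_n ≥ 3n - 3`, so `f n ≤ 3`.
Inserting an entry `1` into an admissible vector raises `g` by at most `3`: put it in front if
`x₁ ≥ 1`, at the end if `x_n ≤ 1`, and otherwise between consecutive entries `x_k ≤ 1 < x_{k+1}`,
where it costs `3 + (x_k - 1)(x_{k+1} - 1)/x_{k+1}`. Hence `f` is nondecreasing for `n ≥ 1`,
and it converges to its supremum `C ≥ f 1 ≥ 1`.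
-/

open Finset Filter Topology

lemma Nat.exists_lt_and_not_succ {P : ℕ → Prop} (h0 : P 0) {n : ℕ} (hn : ¬ P n) :
    ∃ k < n, P k ∧ ¬ P (k + 1) := by
  induction n with
  | zero => exact absurd h0 hn
  | succ n ih =>
    by_cases h : P n
    · exact ⟨n, n.lt_succ_self, h, hn⟩
    · obtain ⟨k, hk, hPk⟩ := ih h
      exact ⟨k, hk.trans n.lt_succ_self, hPk⟩

namespace Shallit

-- `g_n`, with the entries indexed from `0`: only `x 0, …, x (n - 1)` enter.
noncomputable def objective (n : ℕ) (x : ℕ → ℝ) : ℝ :=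
  (∑ j ∈ range n, (x j + 1 / x j)) + ∑ j ∈ range (n - 1), x j / x (j + 1)

def values (n : ℕ) : Set ℝ :=
  {s | ∃ x : ℕ → ℝ, (∀ j, 0 < x j) ∧ s = objective n x}

noncomputable def minValue (n : ℕ) : ℝ := sInf (values n)

lemma three_le_add_one_div_add_div {p q : ℝ} (hp : 0 < p) (hq : 0 < q) :
    3 ≤ p + 1 / q + q / p := by
  have amgm : 3 * p * q ≤ p ^ 2 * q + p + q ^ 2 := by
    nlinarith [sq_nonneg (p - 1), sq_nonneg (q - 1), sq_nonneg (p - q), mul_pos hp hq]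
  have e : p + 1 / q + q / p = (p ^ 2 * q + p + q ^ 2) / (p * q) := by
    field_simp
  rw [e, le_div_iff₀ (by positivity)]
  linarith

lemma objective_succ (k : ℕ) (x : ℕ → ℝ) :
    objective (k + 1) x =
      x 0 + 1 / x k + ∑ j ∈ range k, (x (j + 1) + 1 / x j + x j / x (j + 1)) := by
  simp only [objective, add_tsub_cancel_right, sum_add_distrib]
  rw [sum_range_succ' x, sum_range_succ (fun j => 1 / x j)]
  ring

lemma three_mul_sub_three_le_objective (n : ℕ) {x : ℕ → ℝ} (hx : ∀ j, 0 < x j) :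
    3 * (n : ℝ) - 3 ≤ objective n x := by
  rcases n with _ | k
  · simp [objective]
  · rw [objective_succ]
    have h := card_nsmul_le_sum (range k) _ 3
      fun j _ => three_le_add_one_div_add_div (hx (j + 1)) (hx j)
    simp only [card_range, nsmul_eq_mul] at h
    push_cast
    linarith [hx 0, one_div_pos.mpr (hx k)]

lemma objective_one_const_one : objective 1 (fun _ => 1) = 2 := by
  norm_num [objective]

def concat (a : ℕ) (u v : ℕ → ℝ) : ℕ → ℝ := fun j => if j < a then u j else v (j - a)

lemma concat_of_lt {a j : ℕ} (u v : ℕ → ℝ) (h : j < a) : concat a u v j = u j := if_pos h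

lemma concat_add (a j : ℕ) (u v : ℕ → ℝ) : concat a u v (a + j) = v j := by
  simp [concat]

lemma concat_pos {a : ℕ} {u v : ℕ → ℝ} (hu : ∀ j, 0 < u j) (hv : ∀ j, 0 < v j) (j : ℕ) :
    0 < concat a u v j := by
  unfold concat; split_ifs
  · exact hu j
  · exact hv _

lemma concat_self_shift (a : ℕ) (x : ℕ → ℝ) : concat a x (fun j => x (a + j)) = x := by
  funext j
  by_cases h : j < a
  · exact concat_of_lt _ _ h
  · obtain ⟨i, rfl⟩ := Nat.exists_eq_add_of_le (not_lt.mp h)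
    exact concat_add a i _ _

lemma objective_concat {a b : ℕ} (ha : 0 < a) (hb : 0 < b) (u v : ℕ → ℝ) :
    objective (a + b) (concat a u v) = objective a u + objective b v + u (a - 1) / v 0 := by
  obtain ⟨a, rfl⟩ : ∃ a', a = a' + 1 := ⟨a - 1, by omega⟩
  obtain ⟨b, rfl⟩ : ∃ b', b = b' + 1 := ⟨b - 1, by omega⟩
  rw [objective, show a + 1 + (b + 1) - 1 = a + 1 + b by omega]
  simp only [objective, sum_range_add, sum_range_succ, add_tsub_cancel_right]
  have hu : ∀ j, j ≤ a → concat (a + 1) u v j = u j :=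
    fun j hj => concat_of_lt u v (Nat.lt_succ_of_le hj)
  have hv : ∀ j, concat (a + 1) u v (a + 1 + j + 1) = v (j + 1) :=
    fun j => concat_add (a + 1) (j + 1) u v
  have hv0 : concat (a + 1) u v (a + 1) = v 0 := concat_add (a + 1) 0 u v
  have hsum : ∑ j ∈ range a, (concat (a + 1) u v j + 1 / concat (a + 1) u v j) =
      ∑ j ∈ range a, (u j + 1 / u j) :=
    sum_congr rfl fun j hj => by rw [hu j (mem_range.mp hj).le]
  have hratio : ∑ j ∈ range a, concat (a + 1) u v j / concat (a + 1) u v (j + 1) =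
      ∑ j ∈ range a, u j / u (j + 1) :=
    sum_congr rfl fun j hj => by rw [hu j (mem_range.mp hj).le, hu (j + 1) (mem_range.mp hj)]
  simp only [concat_add, hv, hv0, hsum, hratio, hu a le_rfl]
  ring

lemma objective_insert_one {n k : ℕ} (hk : k + 1 < n) (x : ℕ → ℝ) :
    objective (n + 1) (concat (k + 1) x (concat 1 (fun _ => 1) fun j => x (k + 1 + j))) =
      objective n x + (2 + x k + (1 - x k) / x (k + 1)) := by
  set tail : ℕ → ℝ := fun j => x (k + 1 + j)
  have htail : 0 < n - (k + 1) := by omega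
  have hx_split := objective_concat (a := k + 1) k.succ_pos htail x tail
  rw [concat_self_shift, Nat.add_sub_cancel' hk.le] at hx_split
  have hy_split := objective_concat (a := k + 1) (b := 1 + (n - (k + 1))) k.succ_pos
    (by omega) x (concat 1 (fun _ => 1) tail)
  rw [objective_concat one_pos htail, objective_one_const_one, concat_of_lt _ _ one_pos,
    show k + 1 + (1 + (n - (k + 1))) = n + 1 by omega] at hy_split
  rw [hy_split, hx_split]
  simp only [tail, add_tsub_cancel_right, add_zero, div_one, sub_div]
  ring

lemma exists_objective_succ_le {n : ℕ} (hn : 0 < n) {x : ℕ → ℝ} (hx : ∀ j, 0 < x j) :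
    ∃ y : ℕ → ℝ, (∀ j, 0 < y j) ∧ objective (n + 1) y ≤ objective n x + 3 := by
  have hone : ∀ _ : ℕ, (0 : ℝ) < 1 := fun _ => one_pos
  by_cases hfirst : 1 ≤ x 0
  · refine ⟨concat 1 (fun _ => 1) x, concat_pos hone hx, ?_⟩
    rw [add_comm n, objective_concat one_pos hn, objective_one_const_one]
    have : 1 / x 0 ≤ 1 := (div_le_one (hx 0)).mpr hfirst
    linarith
  by_cases hlast : x (n - 1) ≤ 1
  · refine ⟨concat n x (fun _ => 1), concat_pos hx hone, ?_⟩
    rw [objective_concat hn one_pos, objective_one_const_one, div_one]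
    linarith
  obtain ⟨k, hk, hxk, hxk1⟩ := Nat.exists_lt_and_not_succ (P := fun j => x j ≤ 1)
    (not_le.mp hfirst).le hlast
  rw [not_le] at hxk1
  refine ⟨concat (k + 1) x (concat 1 (fun _ => 1) fun j => x (k + 1 + j)),
    concat_pos hx (concat_pos hone fun j => hx _), ?_⟩
  rw [objective_insert_one (by omega)]
  have : (1 - x k) / x (k + 1) ≤ 1 - x k := div_le_self (by linarith) hxk1.le
  linarith

lemma minValue_le {n : ℕ} {x : ℕ → ℝ} (hx : ∀ j, 0 < x j) : minValue n ≤ objective n x :=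
  csInf_le ⟨3 * (n : ℝ) - 3, by rintro _ ⟨y, hy, rfl⟩; exact three_mul_sub_three_le_objective n hy⟩
    ⟨x, hx, rfl⟩

lemma le_minValue {n : ℕ} {a : ℝ} (h : ∀ x : ℕ → ℝ, (∀ j, 0 < x j) → a ≤ objective n x) :
    a ≤ minValue n :=
  le_csInf ⟨_, fun _ => 1, fun _ => one_pos, rfl⟩ fun _ ⟨x, hx, hs⟩ => hs ▸ h x hx

lemma minValue_one_le : minValue 1 ≤ 2 :=
  (minValue_le fun _ => one_pos).trans_eq objective_one_const_one

lemma minValue_succ_le {n : ℕ} (hn : 0 < n) : minValue (n + 1) ≤ minValue n + 3 :=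
  sub_le_iff_le_add.mp <| le_minValue fun _ hx =>
    let ⟨_, hy, hle⟩ := exists_objective_succ_le hn hx
    sub_le_iff_le_add.mpr ((minValue_le hy).trans hle)

lemma three_mul_sub_minValue_le (n : ℕ) : 3 * (n : ℝ) - minValue n ≤ 3 :=
  sub_le_comm.mp (le_minValue fun _ => three_mul_sub_three_le_objective n)

lemma exists_tendsto_three_mul_sub_minValue :
    ∃ C : ℝ, 0 < C ∧ Tendsto (fun n : ℕ => 3 * (n : ℝ) - minValue n) atTop (𝓝 C) := by
  set f : ℕ → ℝ := fun n => 3 * ((n + 1 : ℕ) : ℝ) - minValue (n + 1)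
  have hmono : Monotone f := monotone_nat_of_le_succ fun n => by
    have := minValue_succ_le n.succ_pos
    simp only [f]; push_cast; linarith
  have hbdd : BddAbove (Set.range f) := ⟨3, by rintro _ ⟨n, rfl⟩; exact three_mul_sub_minValue_le _⟩
  refine ⟨⨆ n, f n, ?_, (tendsto_add_atTop_iff_nat 1).mp (tendsto_atTop_ciSup hmono hbdd)⟩
  have : 0 < f 0 := by
    have := minValue_one_le
    simp only [f]; push_cast; linarith
  exact this.trans_le (le_ciSup hbdd 0)

end Shallit

theorem shallit_minimization_asymptotics (m : ℕ → ℝ)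
    (hm : ∀ n : ℕ, m n = sInf { s : ℝ | ∃ x : ℕ → ℝ, (∀ j, 0 < x j) ∧
      s = (∑ j ∈ Finset.range n, (x j + 1 / x j)) +
          ∑ j ∈ Finset.range (n - 1), x j / x (j + 1) }) :
    ∃ C : ℝ, 0 < C ∧
      Filter.Tendsto (fun n : ℕ => 3 * (n : ℝ) - m n) Filter.atTop (nhds C) := by
  obtain rfl : m = Shallit.minValue := funext hm
  exact Shallit.exists_tendsto_three_mul_sub_minValue
end
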